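/- arXiv:1406.2664 — 6 statements merged into one kernel-verified Lean document; each statement's English description precedes it below -/
import Mathlib

section
/- Let m₁, m₂, m₃, m₄ > 0 and let k ≥ 0 be an integer. Then ∫_{(0,∞)³} (m₄² + m₁²x₁ + m₂²x₂ + m₃²x₃)^{−(k+1)} (1 + 1/x₁ + 1/x₂ + 1/x₃)^{−(k+1)} dx₁dx₂dx₃/(x₁x₂x₃) = (2⁴/(k!)²) ∫₀^∞ (x/2)^{2k+1} K₀(m₁x)K₀(m₂x)K₀(m₃x)K₀(m₄x) dx. -/
/-!
Schwinger parametrisation, `A^{-(k+1)} = (1/k!) ∫₀^∞ t^k e^{-At} dt`, turns the two factors of the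
integrand into exponentials in new variables `t, s`. After exchanging the order of integration the
integrand factorises in `x₁, x₂, x₃`, and each factor integrates to a Bessel function through
`∫₀^∞ e^{-(a x + b/x)} dx/x = 2 K₀(2√(ab))`. What remains is a double integral in `t, s` whose
Bessel factors depend only on `ts`; substituting `s = x²/(4t)` turns the `t`-integral into a fourth
`K₀`, with argument `m₄ x`.
-/

open MeasureTheory

/-- Modified Bessel function of the second kind of order 0:
`K₀(y) = (1/2)∫₀^∞ exp(−(y/2)(u + 1/u)) du/u`. -/
noncomputable def K0 (y : ℝ) : ℝ :=
  (1/2) * ∫ u in Set.Ioi (0:ℝ), Real.exp (-(y/2) * (u + 1/u)) / u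

open Set Real
open scoped ENNReal Nat

lemma lintegral_Ioi_eq_lintegral_comp_mul_left {c : ℝ} (hc : 0 < c) (g : ℝ → ℝ≥0∞) :
    ∫⁻ x in Ioi 0, g x = ∫⁻ u in Ioi 0, ENNReal.ofReal c * g (c * u) := by
  have himage : (c * ·) '' Ioi (0:ℝ) = Ioi 0 := by rw [image_mul_left_Ioi hc, mul_zero]
  conv_lhs => rw [← himage]
  rw [lintegral_image_eq_lintegral_abs_deriv_mul (f' := fun _ => c) measurableSet_Ioi
    (fun u _ => by simpa using ((hasDerivAt_id u).const_mul c).hasDerivWithinAt)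
    (mul_right_injective₀ hc.ne').injOn, abs_of_pos hc]

lemma lintegral_Ioi_eq_lintegral_comp_mul_sq {c : ℝ} (hc : 0 < c) (g : ℝ → ℝ≥0∞) :
    ∫⁻ x in Ioi 0, g x = ∫⁻ u in Ioi 0, ENNReal.ofReal (2 * c * u) * g (c * u ^ 2) := by
  have himage : (fun u => c * u ^ 2) '' Ioi (0:ℝ) = Ioi 0 := by
    refine Subset.antisymm (image_subset_iff.2 fun u (hu : 0 < u) => by
        simp only [mem_preimage, mem_Ioi]; positivity)
      fun x (hx : 0 < x) => ⟨√(x / c), sqrt_pos.2 (div_pos hx hc), ?_⟩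
    simp only [sq_sqrt (div_pos hx hc).le, mul_div_cancel₀ _ hc.ne']
  have hinj : InjOn (fun u => c * u ^ 2) (Ioi 0) := fun a ha b hb hab =>
    (sq_eq_sq₀ (le_of_lt ha) (le_of_lt hb)).1 (mul_left_cancel₀ hc.ne' hab)
  conv_lhs => rw [← himage]
  rw [lintegral_image_eq_lintegral_abs_deriv_mul measurableSet_Ioi
    (fun u _ => ((hasDerivAt_pow 2 u).const_mul c).hasDerivWithinAt) hinj]
  refine setLIntegral_congr_fun measurableSet_Ioi fun u (hu : 0 < u) => ?_
  rw [abs_of_pos (by positivity)]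
  ring_nf

lemma volume_restrict_prod {α β : Type*} [MeasureSpace α] [MeasureSpace β]
    [SFinite (volume : Measure α)] [SFinite (volume : Measure β)] (s : Set α) (t : Set β) :
    volume.restrict (s ×ˢ t) = (volume.restrict s).prod (volume.restrict t) := by
  rw [Measure.prod_restrict, Measure.volume_eq_prod]

lemma lintegral_prod_prod_mul {α β γ : Type*} [MeasurableSpace α] [MeasurableSpace β]
    [MeasurableSpace γ] {μ : Measure α} {ν : Measure β} {ρ : Measure γ} [SFinite ν] [SFinite ρ]
    {f : α → ℝ≥0∞} {g : β → ℝ≥0∞} {h : γ → ℝ≥0∞}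
    (hf : AEMeasurable f μ) (hg : AEMeasurable g ν) (hh : AEMeasurable h ρ) :
    ∫⁻ p, f p.1 * (g p.2.1 * h p.2.2) ∂μ.prod (ν.prod ρ)
      = (∫⁻ x, f x ∂μ) * ((∫⁻ y, g y ∂ν) * ∫⁻ z, h z ∂ρ) := by
  rw [lintegral_prod_mul (f := f) (g := fun z : β × γ => g z.1 * h z.2) hf
    (hg.comp_fst.mul hh.comp_snd), lintegral_prod_mul hg hh]

lemma integral_eq_integral_of_lintegral_ofReal_eq {α β : Type*} [MeasurableSpace α]
    [MeasurableSpace β] {μ : Measure α} {ν : Measure β} {f : α → ℝ} {g : β → ℝ}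
    (h : ∫⁻ a, ENNReal.ofReal (f a) ∂μ = ∫⁻ b, ENNReal.ofReal (g b) ∂ν)
    (hf : 0 ≤ᵐ[μ] f) (hg : 0 ≤ᵐ[ν] g) (hfm : AEStronglyMeasurable f μ)
    (hgm : AEStronglyMeasurable g ν) :
    ∫ a, f a ∂μ = ∫ b, g b ∂ν := by
  rw [integral_eq_lintegral_of_nonneg_ae hf hfm, integral_eq_lintegral_of_nonneg_ae hg hgm, h]

lemma lintegral_pow_mul_exp_neg_mul (k : ℕ) {A : ℝ} (hA : 0 < A) :
    ∫⁻ t in Ioi 0, ENNReal.ofReal (t ^ k * exp (-(A * t)))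
      = ENNReal.ofReal (k ! / A ^ (k + 1)) := by
  have hint := integrableOn_rpow_mul_exp_neg_mul_rpow (p := 1) (s := k) (b := A)
    (by linarith [(Nat.cast_nonneg k : (0:ℝ) ≤ k)]) one_pos hA
  have hval := integral_rpow_mul_exp_neg_mul_Ioi (a := k + 1) (by positivity) hA
  simp only [rpow_one, rpow_natCast, neg_mul] at hint
  simp only [add_sub_cancel_right, rpow_natCast] at hval
  rw [← ofReal_integral_eq_lintegral_ofReal hint (ae_restrict_of_forall_mem measurableSet_Ioi
      fun t (ht : 0 < t) => by positivity), hval, Gamma_nat_eq_factorial, ← Nat.cast_succ,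
    rpow_natCast, div_pow, one_pow, one_div_mul_eq_div]

lemma lintegral_prod_pow_mul_exp_neg_mul (k : ℕ) {A B : ℝ} (hA : 0 < A) (hB : 0 < B) :
    ∫⁻ q in Ioi 0 ×ˢ Ioi 0,
        ENNReal.ofReal (q.1 ^ k * exp (-(A * q.1)) * (q.2 ^ k * exp (-(B * q.2))))
      = ENNReal.ofReal ((k ! : ℝ) ^ 2 / (A * B) ^ (k + 1)) := by
  rw [setLIntegral_congr_fun (measurableSet_Ioi.prod measurableSet_Ioi)
      fun q (hq : 0 < q.1 ∧ 0 < q.2) => ENNReal.ofReal_mul (by have := hq.1; positivity),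
    volume_restrict_prod,
    lintegral_prod_mul (f := fun t => ENNReal.ofReal (t ^ k * exp (-(A * t))))
      (g := fun s => ENNReal.ofReal (s ^ k * exp (-(B * s)))) (by fun_prop) (by fun_prop),
    lintegral_pow_mul_exp_neg_mul k hA, lintegral_pow_mul_exp_neg_mul k hB,
    ← ENNReal.ofReal_mul (by positivity), mul_pow]
  congr 1
  ring

lemma K0_nonneg (y : ℝ) : 0 ≤ K0 y :=
  mul_nonneg one_half_pos.le <| setIntegral_nonneg measurableSet_Ioi fun u (hu : 0 < u) => by
    positivity

@[fun_prop]
lemma measurable_K0 : Measurable K0 := by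
  have h : StronglyMeasurable fun p : ℝ × ℝ => exp (-(p.1 / 2) * (p.2 + 1 / p.2)) / p.2 :=
    (by fun_prop : Measurable _).stronglyMeasurable
  exact measurable_const.mul (h.integral_prod_right' (ν := volume.restrict (Ioi 0))).measurable

lemma integrableOn_exp_neg_mul_add_inv_div {r : ℝ} (hr : 0 < r) :
    IntegrableOn (fun u => exp (-r * (u + 1 / u)) / u) (Ioi 0) := by
  have hbound : ∀ u ∈ Ioi (0:ℝ), ‖exp (-r * (u + 1 / u)) / u‖ ≤ r⁻¹ * exp (-r * u) := by
    intro u (hu : 0 < u)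
    have hz : (r / u) / exp (r / u) ≤ 1 :=
      (div_le_one (exp_pos _)).2 (by linarith [add_one_le_exp (r / u)])
    have hsplit : exp (-r * (u + 1 / u)) / u = r⁻¹ * exp (-r * u) * ((r / u) / exp (r / u)) := by
      rw [neg_mul, neg_mul, mul_add, neg_add, exp_add, mul_one_div, exp_neg (r / u)]
      field_simp
    rw [norm_of_nonneg (by positivity), hsplit]
    exact mul_le_of_le_one_right (by positivity) hz
  exact Integrable.mono' ((exp_neg_integrableOn_Ioi 0 hr).const_mul r⁻¹)
    (by fun_prop : Measurable fun u : ℝ => exp (-r * (u + 1 / u)) / u).aestronglyMeasurable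
    (ae_restrict_of_forall_mem measurableSet_Ioi hbound)

lemma lintegral_exp_neg_mul_add_inv_div {y : ℝ} (hy : 0 < y) :
    ∫⁻ u in Ioi 0, ENNReal.ofReal (exp (-(y / 2) * (u + 1 / u)) / u)
      = ENNReal.ofReal (2 * K0 y) := by
  rw [← ofReal_integral_eq_lintegral_ofReal (integrableOn_exp_neg_mul_add_inv_div (by positivity))
    (ae_restrict_of_forall_mem measurableSet_Ioi fun u (hu : 0 < u) => by positivity), K0]
  congr 1
  ring

lemma lintegral_exp_neg_mul_add_div_div {a b : ℝ} (ha : 0 < a) (hb : 0 < b) :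
    ∫⁻ y in Ioi 0, ENNReal.ofReal (exp (-(a * y + b / y)) / y)
      = ENNReal.ofReal (2 * K0 (2 * √(a * b))) := by
  obtain ⟨p, hp, rfl⟩ : ∃ p, 0 < p ∧ a = p ^ 2 := ⟨√a, sqrt_pos.2 ha, (sq_sqrt ha.le).symm⟩
  obtain ⟨q, hq, rfl⟩ : ∃ q, 0 < q ∧ b = q ^ 2 := ⟨√b, sqrt_pos.2 hb, (sq_sqrt hb.le).symm⟩
  rw [← mul_pow, sqrt_sq (by positivity), lintegral_Ioi_eq_lintegral_comp_mul_left (div_pos hq hp),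
    ← lintegral_exp_neg_mul_add_inv_div (by positivity)]
  refine setLIntegral_congr_fun measurableSet_Ioi fun u (hu : 0 < u) => ?_
  rw [← ENNReal.ofReal_mul (by positivity)]
  congr 1
  have hexp : p ^ 2 * (q / p * u) + q ^ 2 / (q / p * u) = 2 * (p * q) / 2 * (u + 1 / u) := by
    field_simp
  rw [neg_mul, hexp]
  field_simp

noncomputable section FourMasses

variable (m₁ m₂ m₃ m₄ : ℝ) (k : ℕ)

def schwingerIntegrand (x : ℝ × ℝ × ℝ) (q : ℝ × ℝ) : ℝ :=
  q.1 ^ k * exp (-((m₄ ^ 2 + m₁ ^ 2 * x.1 + m₂ ^ 2 * x.2.1 + m₃ ^ 2 * x.2.2) * q.1)) *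
    (q.2 ^ k * exp (-((1 + 1 / x.1 + 1 / x.2.1 + 1 / x.2.2) * q.2))) / (x.1 * x.2.1 * x.2.2)

def besselIntegrand (q : ℝ × ℝ) : ℝ :=
  q.1 ^ k * q.2 ^ k * exp (-(m₄ ^ 2 * q.1 + q.2)) *
    (2 * K0 (2 * √(q.1 * m₁ ^ 2 * q.2)) *
      (2 * K0 (2 * √(q.1 * m₂ ^ 2 * q.2)) * (2 * K0 (2 * √(q.1 * m₃ ^ 2 * q.2)))))

@[fun_prop]
lemma measurable_schwingerIntegrand :
    Measurable fun z : (ℝ × ℝ × ℝ) × (ℝ × ℝ) => schwingerIntegrand m₁ m₂ m₃ m₄ k z.1 z.2 := by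
  unfold schwingerIntegrand; fun_prop

@[fun_prop]
lemma measurable_besselIntegrand : Measurable (besselIntegrand m₁ m₂ m₃ m₄ k) := by
  unfold besselIntegrand; fun_prop

variable {m₁ m₂ m₃ m₄}

lemma lintegral_schwingerIntegrand_right (h₄ : 0 < m₄) {x : ℝ × ℝ × ℝ}
    (hx : 0 < x.1 ∧ 0 < x.2.1 ∧ 0 < x.2.2) :
    ∫⁻ q in Ioi 0 ×ˢ Ioi 0, ENNReal.ofReal (schwingerIntegrand m₁ m₂ m₃ m₄ k x q)
      = ENNReal.ofReal ((k ! : ℝ) ^ 2 *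
          (((m₄ ^ 2 + m₁ ^ 2 * x.1 + m₂ ^ 2 * x.2.1 + m₃ ^ 2 * x.2.2) ^ (k + 1) *
            (1 + 1 / x.1 + 1 / x.2.1 + 1 / x.2.2) ^ (k + 1))⁻¹ / (x.1 * x.2.1 * x.2.2))) := by
  obtain ⟨hx₁, hx₂, hx₃⟩ := hx
  simp only [schwingerIntegrand, div_eq_mul_inv _ (x.1 * x.2.1 * x.2.2)]
  rw [lintegral_congr fun q => ENNReal.ofReal_mul' (by positivity),
    lintegral_mul_const' _ _ ENNReal.ofReal_ne_top,
    lintegral_prod_pow_mul_exp_neg_mul k (by positivity) (by positivity),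
    ← ENNReal.ofReal_mul (by positivity), mul_pow]
  congr 1
  ring

lemma schwingerIntegrand_eq_mul (x : ℝ × ℝ × ℝ) (t s : ℝ) :
    schwingerIntegrand m₁ m₂ m₃ m₄ k x (t, s) = t ^ k * s ^ k * exp (-(m₄ ^ 2 * t + s)) *
      (exp (-(t * m₁ ^ 2 * x.1 + s / x.1)) / x.1 *
        (exp (-(t * m₂ ^ 2 * x.2.1 + s / x.2.1)) / x.2.1 *
          (exp (-(t * m₃ ^ 2 * x.2.2 + s / x.2.2)) / x.2.2))) := by
  simp only [schwingerIntegrand, div_eq_mul_inv, mul_inv, add_mul, neg_add, exp_add, one_mul]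
  ring_nf

lemma lintegral_schwingerIntegrand_left (h₁ : 0 < m₁) (h₂ : 0 < m₂) (h₃ : 0 < m₃) {t s : ℝ}
    (ht : 0 < t) (hs : 0 < s) :
    ∫⁻ x in Ioi 0 ×ˢ (Ioi 0 ×ˢ Ioi 0), ENNReal.ofReal (schwingerIntegrand m₁ m₂ m₃ m₄ k x (t, s))
      = ENNReal.ofReal (besselIntegrand m₁ m₂ m₃ m₄ k (t, s)) := by
  let E (m y : ℝ) : ℝ≥0∞ := ENNReal.ofReal (exp (-(t * m ^ 2 * y + s / y)) / y)
  have hE : ∀ m, 0 < m → ∫⁻ y in Ioi 0, E m y = ENNReal.ofReal (2 * K0 (2 * √(t * m ^ 2 * s))) :=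
    fun m hm => lintegral_exp_neg_mul_add_div_div (by positivity) hs
  have hsplit : ∀ x ∈ Ioi (0:ℝ) ×ˢ (Ioi 0 ×ˢ Ioi 0),
      ENNReal.ofReal (schwingerIntegrand m₁ m₂ m₃ m₄ k x (t, s)) =
        ENNReal.ofReal (t ^ k * s ^ k * exp (-(m₄ ^ 2 * t + s))) *
          (E m₁ x.1 * (E m₂ x.2.1 * E m₃ x.2.2)) := by
    rintro x ⟨hx₁ : 0 < x.1, hx₂ : 0 < x.2.1, hx₃ : 0 < x.2.2⟩
    rw [schwingerIntegrand_eq_mul]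
    simp (disch := positivity) only [E, ENNReal.ofReal_mul]
  rw [setLIntegral_congr_fun (measurableSet_Ioi.prod (measurableSet_Ioi.prod measurableSet_Ioi))
      hsplit, volume_restrict_prod, volume_restrict_prod, lintegral_const_mul _ (by fun_prop),
    lintegral_prod_prod_mul (by fun_prop) (by fun_prop) (by fun_prop), hE m₁ h₁, hE m₂ h₂,
    hE m₃ h₃, besselIntegrand]
  have := K0_nonneg (2 * √(t * m₁ ^ 2 * s))
  have := K0_nonneg (2 * √(t * m₂ ^ 2 * s))
  have := K0_nonneg (2 * √(t * m₃ ^ 2 * s))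
  simp (disch := positivity) only [ENNReal.ofReal_mul]

lemma besselIntegrand_comp_mul_sq (h₁ : 0 < m₁) (h₂ : 0 < m₂) (h₃ : 0 < m₃) {t x : ℝ}
    (ht : 0 < t) (hx : 0 < x) :
    2 * (4 * t)⁻¹ * x * besselIntegrand m₁ m₂ m₃ m₄ k (t, (4 * t)⁻¹ * x ^ 2) =
      (x / 2) ^ (2 * k + 1) * (2 * K0 (m₁ * x) * (2 * K0 (m₂ * x) * (2 * K0 (m₃ * x)))) *
        (exp (-(m₄ ^ 2 * t + (x / 2) ^ 2 / t)) / t) := by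
  have hs : (4 * t)⁻¹ * x ^ 2 = (x / 2) ^ 2 / t := by field_simp; ring
  have hsqrt : ∀ m, 0 < m → 2 * √(t * m ^ 2 * ((x / 2) ^ 2 / t)) = m * x := fun m hm => by
    rw [show t * m ^ 2 * ((x / 2) ^ 2 / t) = (m * x / 2) ^ 2 by field_simp,
      sqrt_sq (by positivity)]
    ring
  have hpow : t ^ k * ((x / 2) ^ 2 / t) ^ k = (x / 2) ^ (2 * k) := by
    rw [← mul_pow, mul_div_cancel₀ _ ht.ne', pow_mul]
  rw [hs, besselIntegrand, hsqrt m₁ h₁, hsqrt m₂ h₂, hsqrt m₃ h₃, hpow, pow_succ]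
  field_simp
  ring

lemma lintegral_besselIntegrand (h₁ : 0 < m₁) (h₂ : 0 < m₂) (h₃ : 0 < m₃) (h₄ : 0 < m₄) :
    ∫⁻ q in Ioi 0 ×ˢ Ioi 0, ENNReal.ofReal (besselIntegrand m₁ m₂ m₃ m₄ k q) =
      ∫⁻ x in Ioi 0, ENNReal.ofReal (2 ^ 4 *
        ((x / 2) ^ (2 * k + 1) * (K0 (m₁ * x) * K0 (m₂ * x) * K0 (m₃ * x) * K0 (m₄ * x)))) := by
  set H : ℝ → ℝ := fun x =>
    (x / 2) ^ (2 * k + 1) * (2 * K0 (m₁ * x) * (2 * K0 (m₂ * x) * (2 * K0 (m₃ * x)))) with hH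
  have hsub : ∀ t ∈ Ioi (0:ℝ),
      ∫⁻ s in Ioi 0, ENNReal.ofReal (besselIntegrand m₁ m₂ m₃ m₄ k (t, s)) =
        ∫⁻ x in Ioi 0,
          ENNReal.ofReal (H x) * ENNReal.ofReal (exp (-(m₄ ^ 2 * t + (x / 2) ^ 2 / t)) / t) := by
    intro t (ht : 0 < t)
    rw [lintegral_Ioi_eq_lintegral_comp_mul_sq (inv_pos.2 (mul_pos four_pos ht))]
    refine setLIntegral_congr_fun measurableSet_Ioi fun x (hx : 0 < x) => ?_
    rw [← ENNReal.ofReal_mul (by positivity), ← ENNReal.ofReal_mul' (by positivity),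
      besselIntegrand_comp_mul_sq k h₁ h₂ h₃ ht hx]
  have hK : ∀ x ∈ Ioi (0:ℝ),
      ∫⁻ t in Ioi 0,
          ENNReal.ofReal (H x) * ENNReal.ofReal (exp (-(m₄ ^ 2 * t + (x / 2) ^ 2 / t)) / t) =
        ENNReal.ofReal (2 ^ 4 * ((x / 2) ^ (2 * k + 1) *
          (K0 (m₁ * x) * K0 (m₂ * x) * K0 (m₃ * x) * K0 (m₄ * x)))) := by
    intro x (hx : 0 < x)
    rw [lintegral_const_mul _ (by fun_prop),
      lintegral_exp_neg_mul_add_div_div (by positivity) (by positivity), ← mul_pow,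
      sqrt_sq (by positivity), show 2 * (m₄ * (x / 2)) = m₄ * x by ring,
      ← ENNReal.ofReal_mul' (mul_nonneg zero_le_two (K0_nonneg _)), hH]
    congr 1
    ring
  rw [volume_restrict_prod,
    lintegral_prod _ (measurable_besselIntegrand m₁ m₂ m₃ m₄ k).ennreal_ofReal.aemeasurable,
    setLIntegral_congr_fun measurableSet_Ioi hsub, lintegral_lintegral_swap (by fun_prop),
    setLIntegral_congr_fun measurableSet_Ioi hK]

lemma lintegral_factorial_sq_mul_eq_lintegral_K0_moment
    (h₁ : 0 < m₁) (h₂ : 0 < m₂) (h₃ : 0 < m₃) (h₄ : 0 < m₄) :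
    ∫⁻ p in Ioi 0 ×ˢ (Ioi 0 ×ˢ Ioi 0), ENNReal.ofReal ((k ! : ℝ) ^ 2 *
        (((m₄ ^ 2 + m₁ ^ 2 * p.1 + m₂ ^ 2 * p.2.1 + m₃ ^ 2 * p.2.2) ^ (k + 1) *
          (1 + 1 / p.1 + 1 / p.2.1 + 1 / p.2.2) ^ (k + 1))⁻¹ / (p.1 * p.2.1 * p.2.2))) =
      ∫⁻ x in Ioi 0, ENNReal.ofReal (2 ^ 4 *
        ((x / 2) ^ (2 * k + 1) * (K0 (m₁ * x) * K0 (m₂ * x) * K0 (m₃ * x) * K0 (m₄ * x)))) :=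
  calc _ = ∫⁻ p in Ioi 0 ×ˢ (Ioi 0 ×ˢ Ioi 0), ∫⁻ q in Ioi 0 ×ˢ Ioi 0,
        ENNReal.ofReal (schwingerIntegrand m₁ m₂ m₃ m₄ k p q) :=
      setLIntegral_congr_fun (measurableSet_Ioi.prod (measurableSet_Ioi.prod measurableSet_Ioi))
        fun p hp => (lintegral_schwingerIntegrand_right k h₄ hp).symm
    _ = ∫⁻ q in Ioi 0 ×ˢ Ioi 0, ∫⁻ p in Ioi 0 ×ˢ (Ioi 0 ×ˢ Ioi 0),
        ENNReal.ofReal (schwingerIntegrand m₁ m₂ m₃ m₄ k p q) :=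
      lintegral_lintegral_swap (by fun_prop)
    _ = ∫⁻ q in Ioi 0 ×ˢ Ioi 0, ENNReal.ofReal (besselIntegrand m₁ m₂ m₃ m₄ k q) :=
      setLIntegral_congr_fun (measurableSet_Ioi.prod measurableSet_Ioi) fun q hq =>
        lintegral_schwingerIntegrand_left k h₁ h₂ h₃ hq.1 hq.2
    _ = _ := lintegral_besselIntegrand k h₁ h₂ h₃ h₄

end FourMasses

theorem stmt1 (m₁ m₂ m₃ m₄ : ℝ) (h₁ : 0 < m₁) (h₂ : 0 < m₂) (h₃ : 0 < m₃) (h₄ : 0 < m₄)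
    (k : ℕ) :
    (∫ p in Set.Ioi (0:ℝ) ×ˢ (Set.Ioi (0:ℝ) ×ˢ Set.Ioi (0:ℝ)),
      ((m₄^2 + m₁^2 * p.1 + m₂^2 * p.2.1 + m₃^2 * p.2.2)^(k+1) *
        (1 + 1/p.1 + 1/p.2.1 + 1/p.2.2)^(k+1))⁻¹ / (p.1 * p.2.1 * p.2.2)) =
    (2^4 / ((Nat.factorial k : ℝ))^2) * ∫ x in Set.Ioi (0:ℝ),
      (x/2)^(2*k+1) * (K0 (m₁*x) * K0 (m₂*x) * K0 (m₃*x) * K0 (m₄*x)) := by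
  have h := integral_eq_integral_of_lintegral_ofReal_eq
    (lintegral_factorial_sq_mul_eq_lintegral_K0_moment k h₁ h₂ h₃ h₄)
    (ae_restrict_of_forall_mem (measurableSet_Ioi.prod (measurableSet_Ioi.prod measurableSet_Ioi))
      fun p ⟨(hp₁ : 0 < p.1), (hp₂ : 0 < p.2.1), (hp₃ : 0 < p.2.2)⟩ => by positivity)
    (ae_restrict_of_forall_mem measurableSet_Ioi fun x (hx : 0 < x) => by
      have := K0_nonneg (m₁ * x); have := K0_nonneg (m₂ * x)
      have := K0_nonneg (m₃ * x); have := K0_nonneg (m₄ * x)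
      positivity)
    (Measurable.aestronglyMeasurable (by fun_prop)) (Measurable.aestronglyMeasurable (by fun_prop))
  rw [integral_const_mul, integral_const_mul] at h
  rw [div_mul_eq_mul_div, eq_div_iff (by positivity), mul_comm, h]
end

section
/- Let m₁, m₂, m₃, m₄ > 0 and let t be a real number with 0 ≤ t < (m₁+m₂+m₃+m₄)². Then ∫_{(0,∞)³} [ (m₄² + m₁²x₁ + m₂²x₂ + m₃²x₃)(1 + 1/x₁ + 1/x₂ + 1/x₃) − t ]^{−1} dx₁dx₂dx₃/(x₁x₂x₃) = ∑_{k≥0} t^k · I_k, where I_k := ∫_{(0,∞)³} (m₄² + m₁²x₁ + m₂²x₂ + m₃²x₃)^{−(k+1)} (1 + 1/x₁ + 1/x₂ + 1/x₃)^{−(k+1)} dx₁dx₂dx₃/(x₁x₂x₃), and the series on the right converges. -/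
/-!
On the octant, Cauchy–Schwarz gives `(m₁ + m₂ + m₃ + m₄)² ≤ A := S · T`, where
`S = m₄² + m₁²x + m₂²y + m₃²z` and `T = 1 + 1/x + 1/y + 1/z`. Hence `0 ≤ t < A`, and
`1/(A - t) = ∑ₖ tᵏ / Aᵏ⁺¹` is a series of nonnegative terms, which may be integrated termwise by
dominated convergence once `1/((A - t) x y z)` is integrable. For that, `A - t ≥ (1 - t/(∑ mᵢ)²) A`,
`S ≥ (min mᵢ²) (1 + x + y + z)`, and the bounds `(1 + x)(1 + y)(1 + z) ≤ (1 + x + y + z)³`,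
`x²y²z² (1 + x)(1 + y)(1 + z) ≤ (xyz T)³` (each factor is at most the sum) dominate the
integrand by a constant times `∏ (x (1 + x))^(-2/3)`, a product of functions integrable on `(0, ∞)`.
-/

open MeasureTheory

/-- The coefficient integral `I_k` of the series expansion of the three-banana
integral with general masses. -/
noncomputable def Ik (m₁ m₂ m₃ m₄ : ℝ) (k : ℕ) : ℝ :=
  ∫ p in Set.Ioi (0:ℝ) ×ˢ (Set.Ioi (0:ℝ) ×ˢ Set.Ioi (0:ℝ)),
    ((m₄^2 + m₁^2 * p.1 + m₂^2 * p.2.1 + m₃^2 * p.2.2)^(k+1) *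
      (1 + 1/p.1 + 1/p.2.1 + 1/p.2.2)^(k+1))⁻¹ / (p.1 * p.2.1 * p.2.2)

open Set

lemma hasSum_integral_of_nonneg {α ι : Type*} [MeasurableSpace α] [Countable ι] {μ : Measure α}
    {F : ι → α → ℝ} {f : α → ℝ} (hF : ∀ n, AEStronglyMeasurable (F n) μ)
    (hF₀ : ∀ n, 0 ≤ᵐ[μ] F n) (hf : Integrable f μ)
    (h : ∀ᵐ a ∂μ, HasSum (fun n => F n a) (f a)) :
    HasSum (fun n => ∫ a, F n a ∂μ) (∫ a, f a ∂μ) := by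
  refine hasSum_integral_of_dominated_convergence F hF (fun n => ?_)
    (h.mono fun a ha => ha.summable) (hf.congr (h.mono fun a ha => ha.tsum_eq.symm)) h
  filter_upwards [hF₀ n] with a ha
  rw [Real.norm_of_nonneg ha]

lemma hasSum_pow_mul_inv_pow_succ {t A : ℝ} (h : |t| < A) :
    HasSum (fun k : ℕ => t ^ k * (A ^ (k + 1))⁻¹) (A - t)⁻¹ := by
  have hA : 0 < A := (abs_nonneg t).trans_lt h
  have hr : |t / A| < 1 := by rwa [abs_div, abs_of_pos hA, div_lt_one hA]
  have hterm : ∀ k : ℕ, (t / A) ^ k * A⁻¹ = t ^ k * (A ^ (k + 1))⁻¹ := fun k => by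
    rw [div_pow, pow_succ]; field_simp
  have hsum : (1 - t / A)⁻¹ * A⁻¹ = (A - t)⁻¹ := by
    rw [← mul_inv, sub_mul, div_mul_cancel₀ _ hA.ne', one_mul]
  simpa only [hterm, hsum] using (hasSum_geometric_of_abs_lt_one hr).mul_right A⁻¹

lemma integrableOn_Ioi_mul_one_add_rpow {r : ℝ} (h₁ : -1 < r) (h₂ : r < -1/2) :
    IntegrableOn (fun x : ℝ => (x * (1 + x)) ^ r) (Ioi 0) := by
  have hr : r ≤ 0 := by linarith
  rw [← Ioo_union_Ici_eq_Ioi zero_lt_one]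
  refine IntegrableOn.union ?_ ?_
  · refine ((intervalIntegral.integrableOn_Ioo_rpow_iff zero_lt_one).2 h₁).mono'
      (by fun_prop : Measurable _).aestronglyMeasurable
      (ae_restrict_of_forall_mem measurableSet_Ioo fun x hx => ?_)
    have hx0 : 0 < x := hx.1
    rw [Real.norm_of_nonneg (by positivity : (0:ℝ) ≤ (x * (1 + x)) ^ r)]
    exact Real.rpow_le_rpow_of_nonpos hx0 (by nlinarith) hr
  · rw [integrableOn_Ici_iff_integrableOn_Ioi]
    refine (integrableOn_Ioi_rpow_of_lt (a := 2 * r) (by linarith) zero_lt_one).mono'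
      (by fun_prop : Measurable _).aestronglyMeasurable
      (ae_restrict_of_forall_mem measurableSet_Ioi fun x (hx : 1 < x) => ?_)
    have hx0 : 0 < x := by linarith
    rw [Real.norm_of_nonneg (by positivity : (0:ℝ) ≤ (x * (1 + x)) ^ r), Real.rpow_mul hx0.le,
      Real.rpow_two]
    exact Real.rpow_le_rpow_of_nonpos (by positivity) (by nlinarith) hr

lemma sq_sum_le_mul_one_add_inv {m₁ m₂ m₃ m₄ x y z : ℝ} (hx : 0 < x) (hy : 0 < y) (hz : 0 < z) :
    (m₁ + m₂ + m₃ + m₄) ^ 2 ≤ (m₄^2 + m₁^2 * x + m₂^2 * y + m₃^2 * z) * (1 + 1/x + 1/y + 1/z) := by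
  have := Finset.univ.sq_sum_div_le_sum_sq_div ![m₄, m₁, m₂, m₃] (g := ![1, 1/x, 1/y, 1/z])
    (by intro i _; fin_cases i <;> simp [hx, hy, hz])
  simp only [Fin.sum_univ_four, Matrix.cons_val] at this
  rw [div_le_iff₀ (by positivity)] at this
  simpa [add_comm, add_left_comm, add_assoc] using this

lemma prod_mul_one_add_rpow_le {x y z : ℝ} (hx : 0 < x) (hy : 0 < y) (hz : 0 < z) :
    (x * (1 + x) * (y * (1 + y)) * (z * (1 + z))) ^ (2/3 : ℝ) ≤
      (1 + x + y + z) * (1 + 1/x + 1/y + 1/z) * (x * y * z) := by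
  set u := 1 + x + y + z
  set v := x * y + y * z + z * x + x * y * z
  have hv : (1 + 1/x + 1/y + 1/z) * (x * y * z) = v := by field_simp; ring
  have hu3 : (1 + x) * (1 + y) * (1 + z) ≤ u ^ 3 := by
    calc (1 + x) * (1 + y) * (1 + z) ≤ u * u * u := by gcongr <;> linarith
      _ = u ^ 3 := by ring
  have hv3 : (y * z * (1 + x)) * (x * z * (1 + y)) * (x * y * (1 + z)) ≤ v ^ 3 := by
    calc (y * z * (1 + x)) * (x * z * (1 + y)) * (x * y * (1 + z)) ≤ v * v * v := by
          gcongr <;> nlinarith [mul_pos (mul_pos hx hy) hz, mul_pos hx hy, mul_pos hy hz,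
            mul_pos hx hz]
      _ = v ^ 3 := by ring
  have hsq : (x * (1 + x) * (y * (1 + y)) * (z * (1 + z))) ^ 2 ≤ (u * v) ^ 3 := by
    calc _ = ((1 + x) * (1 + y) * (1 + z)) *
          ((y * z * (1 + x)) * (x * z * (1 + y)) * (x * y * (1 + z))) := by ring
      _ ≤ u ^ 3 * v ^ 3 := by gcongr
      _ = (u * v) ^ 3 := by ring
  rw [mul_assoc u, hv]
  calc _ = ((x * (1 + x) * (y * (1 + y)) * (z * (1 + z))) ^ 2) ^ ((3 : ℕ)⁻¹ : ℝ) := by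
        rw [← Real.rpow_natCast, ← Real.rpow_mul (by positivity)]; norm_num
    _ ≤ ((u * v) ^ 3) ^ ((3 : ℕ)⁻¹ : ℝ) := by gcongr
    _ = u * v := Real.pow_rpow_inv_natCast (by positivity) (by norm_num)

lemma hasSum_pow_mul_integrand {m₁ m₂ m₃ m₄ t x y z : ℝ} (ht₀ : 0 ≤ t)
    (ht : t < (m₁ + m₂ + m₃ + m₄) ^ 2) (hx : 0 < x) (hy : 0 < y) (hz : 0 < z) :
    HasSum (fun k : ℕ => t ^ k * (((m₄^2 + m₁^2 * x + m₂^2 * y + m₃^2 * z) ^ (k + 1) *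
        (1 + 1/x + 1/y + 1/z) ^ (k + 1))⁻¹ / (x * y * z)))
      (((m₄^2 + m₁^2 * x + m₂^2 * y + m₃^2 * z) * (1 + 1/x + 1/y + 1/z) - t)⁻¹ / (x * y * z)) := by
  have htA := (abs_of_nonneg ht₀).trans_lt (ht.trans_le (sq_sum_le_mul_one_add_inv hx hy hz))
  simpa only [← mul_pow, mul_div_assoc] using
    (hasSum_pow_mul_inv_pow_succ htA).div_const (x * y * z)

lemma exists_integrand_le_mul_rpow {m₁ m₂ m₃ m₄ t : ℝ} (h₁ : 0 < m₁) (h₂ : 0 < m₂) (h₃ : 0 < m₃)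
    (h₄ : 0 < m₄) (ht₀ : 0 ≤ t) (ht : t < (m₁ + m₂ + m₃ + m₄) ^ 2) :
    ∃ C, ∀ x y z : ℝ, 0 < x → 0 < y → 0 < z →
      ((m₄^2 + m₁^2 * x + m₂^2 * y + m₃^2 * z) * (1 + 1/x + 1/y + 1/z) - t)⁻¹ / (x * y * z) ≤
        C * ((x * (1 + x)) ^ (-(2/3 : ℝ)) *
          ((y * (1 + y)) ^ (-(2/3 : ℝ)) * (z * (1 + z)) ^ (-(2/3 : ℝ)))) := by
  set c := (m₁ + m₂ + m₃ + m₄) ^ 2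
  set c₁ := min (min (m₁^2) (m₂^2)) (min (m₃^2) (m₄^2))
  have hc : 0 < c := by positivity
  have hc₁ : 0 < c₁ := by positivity
  have hδ : 0 < 1 - t / c := by rwa [sub_pos, div_lt_one hc]
  refine ⟨((1 - t / c) * c₁)⁻¹, fun x y z hx hy hz => ?_⟩
  set S := m₄^2 + m₁^2 * x + m₂^2 * y + m₃^2 * z
  set T := 1 + 1/x + 1/y + 1/z
  set P := x * (1 + x) * (y * (1 + y)) * (z * (1 + z))
  have hS : c₁ * (1 + x + y + z) ≤ S := by
    have : c₁ ≤ m₁^2 := (min_le_left _ _).trans (min_le_left _ _)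
    have : c₁ ≤ m₂^2 := (min_le_left _ _).trans (min_le_right _ _)
    have : c₁ ≤ m₃^2 := (min_le_right _ _).trans (min_le_left _ _)
    have : c₁ ≤ m₄^2 := (min_le_right _ _).trans (min_le_right _ _)
    nlinarith
  have hSTt : (1 - t / c) * (S * T) ≤ S * T - t := by
    have := mul_le_mul_of_nonneg_left (sq_sum_le_mul_one_add_inv (m₁ := m₁) (m₂ := m₂)
      (m₃ := m₃) (m₄ := m₄) hx hy hz) (div_nonneg ht₀ hc.le)
    rw [div_mul_cancel₀ _ hc.ne'] at this
    linarith
  have hlow : (1 - t / c) * c₁ * P ^ (2/3 : ℝ) ≤ (S * T - t) * (x * y * z) :=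
    calc (1 - t / c) * c₁ * P ^ (2/3 : ℝ)
        ≤ (1 - t / c) * c₁ * ((1 + x + y + z) * T * (x * y * z)) := by
          gcongr; exact prod_mul_one_add_rpow_le hx hy hz
      _ = (1 - t / c) * ((c₁ * (1 + x + y + z)) * T) * (x * y * z) := by ring
      _ ≤ (1 - t / c) * (S * T) * (x * y * z) := by gcongr
      _ ≤ (S * T - t) * (x * y * z) := by gcongr
  have hP : (x * (1 + x)) ^ (-(2/3 : ℝ)) * ((y * (1 + y)) ^ (-(2/3 : ℝ)) *
      (z * (1 + z)) ^ (-(2/3 : ℝ))) = (P ^ (2/3 : ℝ))⁻¹ := by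
    rw [← Real.mul_rpow (by positivity) (by positivity),
      ← Real.mul_rpow (by positivity) (by positivity), Real.rpow_neg (by positivity), ← mul_assoc]
  rw [hP, div_eq_mul_inv, ← mul_inv, ← mul_inv]
  exact inv_anti₀ (by positivity) hlow

lemma integrableOn_integrand {m₁ m₂ m₃ m₄ t : ℝ} (h₁ : 0 < m₁) (h₂ : 0 < m₂) (h₃ : 0 < m₃)
    (h₄ : 0 < m₄) (ht₀ : 0 ≤ t) (ht : t < (m₁ + m₂ + m₃ + m₄) ^ 2) :
    IntegrableOn (fun p : ℝ × ℝ × ℝ => ((m₄^2 + m₁^2 * p.1 + m₂^2 * p.2.1 + m₃^2 * p.2.2) *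
        (1 + 1/p.1 + 1/p.2.1 + 1/p.2.2) - t)⁻¹ / (p.1 * p.2.1 * p.2.2))
      (Ioi 0 ×ˢ (Ioi 0 ×ˢ Ioi 0)) := by
  obtain ⟨C, hC⟩ := exists_integrand_le_mul_rpow h₁ h₂ h₃ h₄ ht₀ ht
  have hw := integrableOn_Ioi_mul_one_add_rpow (r := -(2/3)) (by norm_num) (by norm_num)
  have hbound : IntegrableOn (fun p : ℝ × ℝ × ℝ => C * ((p.1 * (1 + p.1)) ^ (-(2/3 : ℝ)) *
      ((p.2.1 * (1 + p.2.1)) ^ (-(2/3 : ℝ)) * (p.2.2 * (1 + p.2.2)) ^ (-(2/3 : ℝ)))))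
      (Ioi 0 ×ˢ (Ioi 0 ×ˢ Ioi 0)) := by
    rw [IntegrableOn, Measure.volume_eq_prod, ← Measure.prod_restrict, Measure.volume_eq_prod,
      ← Measure.prod_restrict]
    exact (hw.mul_prod (hw.mul_prod hw)).const_mul C
  refine hbound.mono' (by fun_prop : Measurable _).aestronglyMeasurable
    (ae_restrict_of_forall_mem (measurableSet_Ioi.prod (measurableSet_Ioi.prod measurableSet_Ioi))
      fun p (⟨hx, hy, hz⟩ : 0 < p.1 ∧ 0 < p.2.1 ∧ 0 < p.2.2) => ?_)
  have hA := sq_sum_le_mul_one_add_inv (m₁ := m₁) (m₂ := m₂) (m₃ := m₃) (m₄ := m₄) hx hy hz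
  rw [Real.norm_of_nonneg (div_nonneg (inv_nonneg.2 (by linarith)) (by positivity))]
  exact hC _ _ _ hx hy hz

theorem stmt2 (m₁ m₂ m₃ m₄ t : ℝ) (h₁ : 0 < m₁) (h₂ : 0 < m₂) (h₃ : 0 < m₃) (h₄ : 0 < m₄)
    (ht0 : 0 ≤ t) (ht : t < (m₁ + m₂ + m₃ + m₄)^2) :
    Summable (fun k : ℕ => t^k * Ik m₁ m₂ m₃ m₄ k) ∧
    (∫ p in Set.Ioi (0:ℝ) ×ˢ (Set.Ioi (0:ℝ) ×ˢ Set.Ioi (0:ℝ)),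
      ((m₄^2 + m₁^2 * p.1 + m₂^2 * p.2.1 + m₃^2 * p.2.2) *
        (1 + 1/p.1 + 1/p.2.1 + 1/p.2.2) - t)⁻¹ / (p.1 * p.2.1 * p.2.2)) =
    ∑' k : ℕ, t^k * Ik m₁ m₂ m₃ m₄ k := by
  have hQ : MeasurableSet (Ioi (0:ℝ) ×ˢ (Ioi (0:ℝ) ×ˢ Ioi (0:ℝ))) :=
    measurableSet_Ioi.prod (measurableSet_Ioi.prod measurableSet_Ioi)
  have hsum : HasSum (fun k : ℕ => t^k * Ik m₁ m₂ m₃ m₄ k)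
      (∫ p in Ioi (0:ℝ) ×ˢ (Ioi (0:ℝ) ×ˢ Ioi (0:ℝ)),
        ((m₄^2 + m₁^2 * p.1 + m₂^2 * p.2.1 + m₃^2 * p.2.2) *
          (1 + 1/p.1 + 1/p.2.1 + 1/p.2.2) - t)⁻¹ / (p.1 * p.2.1 * p.2.2)) := by
    simp only [Ik, ← integral_const_mul]
    refine hasSum_integral_of_nonneg (fun k => (by fun_prop : Measurable _).aestronglyMeasurable)
      (fun k => ae_restrict_of_forall_mem hQ
        fun p (⟨hx, hy, hz⟩ : 0 < p.1 ∧ 0 < p.2.1 ∧ 0 < p.2.2) => by positivity)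
      (integrableOn_integrand h₁ h₂ h₃ h₄ ht0 ht)
      (ae_restrict_of_forall_mem hQ fun p ⟨hx, hy, hz⟩ => hasSum_pow_mul_integrand ht0 ht hx hy hz)
  exact ⟨hsum.summable, hsum.tsum_eq.symm⟩
end

section
/- For each integer k ≥ 0 let I_k := (2⁴/(k!)²) ∫₀^∞ (x/2)^{2k+1} K₀(x)⁴ dx. Then for every integer k ≥ 0 the recursion (k+1)³·I_k − 2(2k+3)(5k²+15k+12)·I_{k+1} + 64(k+2)³·I_{k+2} = 0 holds; equivalently, with α_k = (k+1)³, β_k = −2(2k+1)(5k²+5k+2), γ_k = 64k³, one has α_k I_k + β_{k+1} I_{k+1} + γ_{k+2} I_{k+2} = 0. -/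
open MeasureTheory

/-- The Bessel moment `I_k = (2⁴/(k!)²) ∫₀^∞ (x/2)^{2k+1} K₀(x)⁴ dx`. -/
noncomputable def besselMoment (k : ℕ) : ℝ :=
  (2^4 / ((Nat.factorial k : ℝ))^2) * ∫ x in Set.Ioi (0:ℝ), (x/2)^(2*k+1) * (K0 x)^4

/-!
With `kernel a u = exp (-a (u + 1/u))` and `I_j(a) = ∫₀^∞ (u + 1/u)^j kernel a u du/u` we have
`K0 x = I_0(x/2)/2` and, differentiating under the integral, `I_j' = -I_{j+1}`. Integrating
`d/du [(u - 1/u) kernel a u]` over `(0, ∞)` gives `a I_2 = I_1 + 4 a I_0`, which is Bessel's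
equation `(x K0')' = x K0`. Both `K0` and `x K0'` are bounded by `I_0(x/4) = O(x^{-1/4} e^{-x/4})`,
so for `a + b = 4` and `n ≥ 1` the moments `M(a,b,n) = ∫₀^∞ xⁿ K0ᵃ (x K0')ᵇ dx` converge
and integration by parts has no boundary terms:
`(n+1) M(a,b,n) + a M(a-1,b+1,n) + b M(a+1,b-1,n+2) = 0`.
Eliminating the moments with `b > 0` from nine of these relations leaves the recurrence
`(n+1)⁵ c_n - 4(n+2)(5n² + 20n + 23) c_{n+2} + 64(n+3) c_{n+4} = 0` for `c_n = M(4,0,n)`,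
and `n = 2k + 1` is the claim.
-/

open Set Filter Real
open scoped Topology Nat

theorem integral_Ioi_of_hasDerivAt_of_tendsto_nhdsGT {f f' : ℝ → ℝ} {a m₀ m : ℝ}
    (hderiv : ∀ x ∈ Ioi a, HasDerivAt f (f' x) x) (hint : IntegrableOn f' (Ioi a))
    (h₀ : Tendsto f (𝓝[>] a) (𝓝 m₀)) (htop : Tendsto f atTop (𝓝 m)) :
    ∫ x in Ioi a, f' x = m - m₀ := by
  simpa using integral_Ioi_deriv_mul_eq_sub (v := fun _ => (1 : ℝ)) (v' := fun _ => 0) hderiv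
    (fun x _ => hasDerivAt_const x 1) (by simpa [Pi.mul_def, Pi.add_def] using hint)
    (by simpa [Pi.mul_def] using h₀) (by simpa [Pi.mul_def] using htop)

theorem integrableOn_pow_mul_exp_neg_Ioi (n : ℕ) :
    IntegrableOn (fun x : ℝ => x ^ n * exp (-x)) (Ioi 0) :=
  (GammaIntegral_convergent (s := n + 1) (by positivity)).congr_fun
    (fun x _ => by simp only [add_sub_cancel_right, rpow_natCast, mul_comm]) measurableSet_Ioi

theorem mul_exp_neg_le_one (t : ℝ) : t * exp (-t) ≤ 1 := by
  rw [exp_neg, ← div_eq_mul_inv, div_le_one (exp_pos t)]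
  linarith [add_one_le_exp t]

theorem two_le_add_inv {u : ℝ} (hu : 0 < u) : 2 ≤ u + 1/u := by
  have : 0 ≤ (u - 1) ^ 2 / u := by positivity
  have h : (u - 1) ^ 2 / u = u + 1/u - 2 := by field_simp; ring
  linarith

theorem tendsto_add_inv_nhdsGT_zero : Tendsto (fun u : ℝ => u + 1/u) (𝓝[>] 0) atTop :=
  tendsto_atTop_mono' (f₁ := fun u => 1/u) _
    (eventually_mem_nhdsWithin.mono fun u (hu : 0 < u) => le_add_of_nonneg_left hu.le)
    (by simpa only [one_div] using tendsto_inv_nhdsGT_zero)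

theorem tendsto_add_inv_atTop : Tendsto (fun u : ℝ => u + 1/u) atTop atTop :=
  tendsto_atTop_mono' _ ((eventually_gt_atTop 0).mono fun u (hu : 0 < u) => by
    have : 0 < 1/u := by positivity
    exact le_add_of_nonneg_right this.le) tendsto_id

theorem exp_neg_le_rpow_neg {s t : ℝ} (hs₀ : 0 ≤ s) (hs₁ : s ≤ 1) (ht : 0 < t) :
    exp (-t) ≤ t ^ (-s) := by
  rw [rpow_neg ht.le, exp_neg]
  refine inv_anti₀ (by positivity) ?_
  rcases le_total t 1 with h | h
  · exact (rpow_le_one ht.le h hs₀).trans (one_le_exp ht.le)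
  · calc t ^ s ≤ t ^ (1 : ℝ) := rpow_le_rpow_of_exponent_le h hs₁
      _ ≤ exp t := by rw [rpow_one]; linarith [add_one_le_exp t]

namespace BesselK0

noncomputable def kernel (a u : ℝ) : ℝ := exp (-a * (u + 1/u))

/-- `kernelIntegral j a = (-d/da)ʲ (2 K0 (2a))`. -/
noncomputable def kernelIntegral (j : ℕ) (a : ℝ) : ℝ :=
  ∫ u in Ioi (0:ℝ), (u + 1/u) ^ j * kernel a u / u

lemma kernel_pos (a u : ℝ) : 0 < kernel a u := exp_pos _

lemma kernel_add (a b u : ℝ) : kernel (a + b) u = kernel a u * kernel b u := by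
  rw [kernel, kernel, kernel, ← exp_add]; ring_nf

lemma kernel_le_exp_neg_two_mul {a u : ℝ} (ha : 0 ≤ a) (hu : 0 < u) :
    kernel a u ≤ exp (-(2 * a)) := by
  unfold kernel
  gcongr
  nlinarith [two_le_add_inv hu]

lemma kernel_le_exp_neg_mul {a u : ℝ} (ha : 0 ≤ a) (hu : 0 < u) :
    kernel a u ≤ exp (-(a * u)) := by
  unfold kernel; gcongr; nlinarith [show 0 < 1/u by positivity]

lemma kernel_le_exp_neg_div {a u : ℝ} (ha : 0 ≤ a) (hu : 0 < u) :
    kernel a u ≤ exp (-(a / u)) := by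
  have e : -a * (u + 1/u) = -(a * u) - a / u := by ring
  unfold kernel; gcongr; nlinarith

lemma kernel_antitone {a b u : ℝ} (hab : a ≤ b) (hu : 0 < u) : kernel b u ≤ kernel a u := by
  unfold kernel
  gcongr

/-- Since `(1/u) exp(-a/u) ≤ 1/a`, the factor `1/u` is absorbed at `u → 0`. -/
lemma kernel_div_le {a u : ℝ} (ha : 0 < a) (hu : 0 < u) :
    kernel a u / u ≤ exp (-a * u) / a := by
  have key : a / u * exp (-(a / u)) ≤ 1 := mul_exp_neg_le_one _
  have hsplit : kernel a u = exp (-a * u) * exp (-(a / u)) := by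
    rw [kernel, ← exp_add]; ring_nf
  rw [hsplit, div_le_div_iff₀ hu ha]
  calc exp (-a * u) * exp (-(a / u)) * a = exp (-a * u) * (a / u * exp (-(a / u))) * u := by
        field_simp
    _ ≤ exp (-a * u) * 1 * u := by gcongr
    _ = exp (-a * u) * u := by ring

lemma pow_mul_kernel_le (j : ℕ) {c u : ℝ} (hc : 0 < c) (hu : 0 < u) :
    (u + 1/u) ^ j * kernel (c + c) u ≤ j ! / c ^ j * kernel c u := by
  have hφ : 0 ≤ c * (u + 1/u) := by positivity
  have key : (u + 1/u) ^ j * kernel c u ≤ j ! / c ^ j := by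
    have h := pow_div_factorial_le_exp _ hφ j
    rw [div_le_iff₀ (by positivity)] at h
    rw [kernel, neg_mul, exp_neg, le_div_iff₀ (pow_pos hc j)]
    calc (u + 1/u) ^ j * (exp (c * (u + 1/u)))⁻¹ * c ^ j
        = (c * (u + 1/u)) ^ j * (exp (c * (u + 1/u)))⁻¹ := by rw [mul_pow]; ring
      _ ≤ exp (c * (u + 1/u)) * j ! * (exp (c * (u + 1/u)))⁻¹ := by gcongr
      _ = j ! := by field_simp
  rw [kernel_add, ← mul_assoc]
  exact mul_le_mul_of_nonneg_right key (kernel_pos c u).le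

lemma continuousOn_kernelIntegrand (j : ℕ) (a : ℝ) :
    ContinuousOn (fun u => (u + 1/u) ^ j * kernel a u / u) (Ioi 0) := by
  have hinv : ContinuousOn (fun u : ℝ => 1/u) (Ioi 0) :=
    continuousOn_const.div continuousOn_id fun u hu => hu.ne'
  exact (((continuousOn_id.add hinv).pow j).mul
    (continuous_exp.comp_continuousOn (continuousOn_const.mul (continuousOn_id.add hinv)))).div
    continuousOn_id fun u hu => hu.ne'

lemma integrableOn_kernelIntegrand (j : ℕ) {a : ℝ} (ha : 0 < a) :
    IntegrableOn (fun u => (u + 1/u) ^ j * kernel a u / u) (Ioi 0) := by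
  set c := a / 2
  have hc : 0 < c := by positivity
  refine Integrable.mono' (((exp_neg_integrableOn_Ioi 0 hc).div_const c).const_mul (j ! / c ^ j))
    ((continuousOn_kernelIntegrand j a).aestronglyMeasurable measurableSet_Ioi) ?_
  filter_upwards [ae_restrict_mem measurableSet_Ioi] with u (hu : 0 < u)
  rw [norm_of_nonneg (by have := kernel_pos a u; positivity), show a = c + c by ring]
  calc (u + 1/u) ^ j * kernel (c + c) u / u ≤ j ! / c ^ j * kernel c u / u :=
        div_le_div_of_nonneg_right (pow_mul_kernel_le j hc hu) hu.le
    _ ≤ j ! / c ^ j * (exp (-c * u) / c) := by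
        rw [mul_div_assoc]; exact mul_le_mul_of_nonneg_left (kernel_div_le hc hu) (by positivity)

lemma hasDerivAt_kernel (u a : ℝ) :
    HasDerivAt (fun b => kernel b u) (-(u + 1/u) * kernel a u) a := by
  simpa [kernel, mul_comm] using ((hasDerivAt_id a).neg.mul_const (u + 1/u)).exp

lemma hasDerivAt_kernelIntegral (j : ℕ) {a : ℝ} (ha : 0 < a) :
    HasDerivAt (kernelIntegral j) (-kernelIntegral (j + 1) a) a := by
  have hderiv : ∀ u, ∀ b, HasDerivAt (fun b => (u + 1/u) ^ j * kernel b u / u)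
      (-((u + 1/u) ^ (j + 1) * kernel b u / u)) b := fun u b => by
    refine (((hasDerivAt_kernel u b).const_mul ((u + 1/u) ^ j)).div_const u).congr_deriv ?_
    ring
  have h := hasDerivAt_integral_of_dominated_loc_of_deriv_le (μ := volume.restrict (Ioi 0))
    (F' := fun b u => -((u + 1/u) ^ (j + 1) * kernel b u / u))
    (bound := fun u => (u + 1/u) ^ (j + 1) * kernel (a / 2) u / u)
    (Ioi_mem_nhds (half_lt_self ha))
    (Eventually.of_forall fun b =>
      (continuousOn_kernelIntegrand j b).aestronglyMeasurable measurableSet_Ioi)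
    (integrableOn_kernelIntegrand j ha)
    ((continuousOn_kernelIntegrand (j + 1) a).neg.aestronglyMeasurable measurableSet_Ioi)
    ?_ (integrableOn_kernelIntegrand (j + 1) (half_pos ha))
    (Eventually.of_forall fun u b _ => hderiv u b)
  · rw [kernelIntegral, ← integral_neg]
    exact h.2
  · filter_upwards [ae_restrict_mem measurableSet_Ioi] with u (hu : 0 < u) b (hb : a / 2 < b)
    rw [norm_neg, norm_of_nonneg (by have := kernel_pos b u; positivity)]
    gcongr
    exact kernel_antitone hb.le hu

lemma tendsto_add_inv_mul_kernel {a : ℝ} (ha : 0 < a) {l : Filter ℝ}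
    (hl : Tendsto (fun u => u + 1/u) l atTop) :
    Tendsto (fun u => (u + 1/u) * kernel a u) l (𝓝 0) := by
  simpa [kernel, Function.comp_def] using
    (tendsto_rpow_mul_exp_neg_mul_atTop_nhds_zero 1 a ha).comp hl

/-- Integrate `d/du [(u - 1/u) exp(-a(u + 1/u))]`, using `1 + 1/u² = (u + 1/u)/u` and
`(u - 1/u)(1 - 1/u²) = ((u + 1/u)² - 4)/u`. -/
lemma kernelIntegral_bessel {a : ℝ} (ha : 0 < a) :
    a * kernelIntegral 2 a = kernelIntegral 1 a + 4 * a * kernelIntegral 0 a := by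
  have i₀ := integrableOn_kernelIntegrand 0 ha
  have i₁ := integrableOn_kernelIntegrand 1 ha
  have i₂ := integrableOn_kernelIntegrand 2 ha
  have hderiv : ∀ u ∈ Ioi (0:ℝ), HasDerivAt (fun u => (u - 1/u) * kernel a u)
      ((u + 1/u) ^ 1 * kernel a u / u - a * ((u + 1/u) ^ 2 * kernel a u / u)
        + 4 * a * ((u + 1/u) ^ 0 * kernel a u / u)) u := fun u (hu : 0 < u) => by
    have hφ : HasDerivAt (fun u : ℝ => u + 1/u) (1 - 1/u^2) u := by
      simpa [one_div, sub_eq_add_neg] using (hasDerivAt_id' u).fun_add (hasDerivAt_inv hu.ne')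
    have hψ : HasDerivAt (fun u : ℝ => u - 1/u) (1 + 1/u^2) u := by
      simpa [one_div, sub_eq_add_neg] using (hasDerivAt_id' u).fun_sub (hasDerivAt_inv hu.ne')
    refine (hψ.mul (hφ.const_mul (-a)).exp).congr_deriv ?_
    simp only [kernel]
    field_simp
    ring
  have hlim : ∀ {l : Filter ℝ}, (∀ᶠ u in l, 0 < u) → Tendsto (fun u => u + 1/u) l atTop →
      Tendsto (fun u => (u - 1/u) * kernel a u) l (𝓝 0) := fun hpos hl => by
    refine squeeze_zero_norm' (hpos.mono fun u (hu : 0 < u) => ?_)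
      (tendsto_add_inv_mul_kernel ha hl)
    have : 0 < 1/u := by positivity
    rw [norm_mul, norm_of_nonneg (kernel_pos a u).le, norm_eq_abs]
    exact mul_le_mul_of_nonneg_right (abs_le.2 ⟨by linarith, by linarith⟩) (kernel_pos a u).le
  have h := integral_Ioi_of_hasDerivAt_of_tendsto_nhdsGT hderiv
    ((i₁.sub' (i₂.const_mul a)).fun_add (i₀.const_mul (4 * a)))
    (hlim eventually_mem_nhdsWithin tendsto_add_inv_nhdsGT_zero)
    (hlim (eventually_gt_atTop 0) tendsto_add_inv_atTop)
  rw [integral_add (i₁.sub' (i₂.const_mul a)) (i₀.const_mul _),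
    integral_sub i₁ (i₂.const_mul a), integral_const_mul, integral_const_mul] at h
  simp only [kernelIntegral]
  linarith

lemma integrableOn_kernel_div {b : ℝ} (hb : 0 < b) :
    IntegrableOn (fun u => kernel b u / u) (Ioi 0) := by
  simpa using integrableOn_kernelIntegrand 0 hb

lemma integral_Ioc_kernel_div_le {b : ℝ} (hb : 0 < b) :
    ∫ u in Ioc 0 1, kernel b u / u ≤ 4 * b ^ (-(1/4) : ℝ) := calc
  ∫ u in Ioc 0 1, kernel b u / u ≤ ∫ u in Ioc 0 1, b ^ (-(1/4) : ℝ) * u ^ (-(3/4) : ℝ) := by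
      refine setIntegral_mono_on ((integrableOn_kernel_div hb).mono_set Ioc_subset_Ioi_self)
        ((intervalIntegral.intervalIntegrable_rpow' (by norm_num)).1.const_mul _)
        measurableSet_Ioc fun u ⟨hu, _⟩ => ?_
      calc kernel b u / u ≤ (b / u) ^ (-(1/4) : ℝ) / u := by
            gcongr
            exact (kernel_le_exp_neg_div hb.le hu).trans
              (exp_neg_le_rpow_neg (by norm_num) (by norm_num) (by positivity))
        _ = b ^ (-(1/4) : ℝ) * u ^ (-(3/4) : ℝ) := by
            rw [div_rpow hb.le hu.le, rpow_neg hu.le, show (-(3/4) : ℝ) = 1/4 - 1 by norm_num,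
              rpow_sub_one hu.ne']
            field_simp
  _ = 4 * b ^ (-(1/4) : ℝ) := by
      rw [integral_const_mul, ← intervalIntegral.integral_of_le zero_le_one,
        integral_rpow (Or.inl (by norm_num))]
      norm_num
      ring

lemma integral_Ioi_one_kernel_div_le {b : ℝ} (hb : 0 < b) :
    ∫ u in Ioi 1, kernel b u / u ≤ 4 * b ^ (-(1/4) : ℝ) := calc
  ∫ u in Ioi 1, kernel b u / u ≤ ∫ u in Ioi 1, b ^ (-(1/4) : ℝ) * u ^ (-(5/4) : ℝ) := by
      refine setIntegral_mono_on
        ((integrableOn_kernel_div hb).mono_set (Ioi_subset_Ioi zero_le_one))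
        ((integrableOn_Ioi_rpow_of_lt (by norm_num) one_pos).const_mul _) measurableSet_Ioi
        fun u (hu : 1 < u) => ?_
      have hu₀ : 0 < u := one_pos.trans hu
      calc kernel b u / u ≤ (b * u) ^ (-(1/4) : ℝ) / u := by
            gcongr
            exact (kernel_le_exp_neg_mul hb.le hu₀).trans
              (exp_neg_le_rpow_neg (by norm_num) (by norm_num) (by positivity))
        _ = b ^ (-(1/4) : ℝ) * u ^ (-(5/4) : ℝ) := by
            rw [mul_rpow hb.le hu₀.le, show (-(5/4) : ℝ) = -(1/4) - 1 by norm_num,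
              rpow_sub_one hu₀.ne']
            ring
  _ = 4 * b ^ (-(1/4) : ℝ) := by
      rw [integral_const_mul, integral_Ioi_rpow_of_lt (by norm_num) one_pos]
      norm_num
      ring

/-- The exponent `1/4` is what makes `x K0(x)⁴` integrable at `0`. -/
lemma kernelIntegral_zero_le {b : ℝ} (hb : 0 < b) :
    kernelIntegral 0 b ≤ 8 * b ^ (-(1/4) : ℝ) := by
  have hint := integrableOn_kernel_div hb
  simp only [kernelIntegral, pow_zero, one_mul]
  rw [← Ioc_union_Ioi_eq_Ioi zero_le_one, setIntegral_union (Ioc_disjoint_Ioi le_rfl)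
    measurableSet_Ioi (hint.mono_set Ioc_subset_Ioi_self)
    (hint.mono_set (Ioi_subset_Ioi zero_le_one))]
  linarith [integral_Ioc_kernel_div_le hb, integral_Ioi_one_kernel_div_le hb]

lemma kernelIntegral_nonneg (j : ℕ) (a : ℝ) : 0 ≤ kernelIntegral j a :=
  setIntegral_nonneg measurableSet_Ioi fun u (hu : 0 < u) => by
    have := kernel_pos a u; positivity

lemma kernelIntegral_zero_two_mul_le {b : ℝ} (hb : 0 < b) :
    kernelIntegral 0 (2 * b) ≤ exp (-(2 * b)) * kernelIntegral 0 b := by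
  rw [kernelIntegral, kernelIntegral, ← integral_const_mul]
  refine setIntegral_mono_on (integrableOn_kernelIntegrand 0 (by positivity))
    ((integrableOn_kernelIntegrand 0 hb).const_mul _) measurableSet_Ioi fun u (hu : 0 < u) => ?_
  simp only [pow_zero, one_mul]
  calc kernel (2 * b) u / u = kernel b u * (kernel b u / u) := by rw [two_mul, kernel_add]; ring
    _ ≤ exp (-(2 * b)) * (kernel b u / u) :=
      mul_le_mul_of_nonneg_right (kernel_le_exp_neg_two_mul hb.le hu)
        (div_nonneg (kernel_pos b u).le hu.le)

/-- Pointwise `t e^{-2t} ≤ e^{-t}` with `t = a(u + 1/u)`. -/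
lemma mul_kernelIntegral_one_two_mul_le {a : ℝ} (ha : 0 < a) :
    a * kernelIntegral 1 (2 * a) ≤ kernelIntegral 0 a := by
  rw [kernelIntegral, kernelIntegral, ← integral_const_mul]
  refine setIntegral_mono_on ((integrableOn_kernelIntegrand 1 (by positivity)).const_mul _)
    (integrableOn_kernelIntegrand 0 ha) measurableSet_Ioi fun u (hu : 0 < u) => ?_
  have key : a * (u + 1/u) * kernel a u ≤ 1 := by
    simpa [kernel, neg_mul] using mul_exp_neg_le_one (a * (u + 1/u))
  rw [two_mul, kernel_add, pow_one, pow_zero, one_mul]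
  calc a * ((u + 1/u) * (kernel a u * kernel a u) / u)
      = a * (u + 1/u) * kernel a u * (kernel a u / u) := by ring
    _ ≤ 1 * (kernel a u / u) := by gcongr; have := kernel_pos a u; positivity
    _ = kernel a u / u := one_mul _

lemma kernelIntegral_zero_pow_four_le {x : ℝ} (hx : 0 < x) :
    kernelIntegral 0 (x / 4) ^ 4 ≤ 8 ^ 5 * exp (-x) / x := by
  have hx8 : 0 < x / 8 := by positivity
  have h := (kernelIntegral_zero_two_mul_le hx8).trans
    (mul_le_mul_of_nonneg_left (kernelIntegral_zero_le hx8) (exp_pos _).le)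
  rw [show 2 * (x / 8) = x / 4 by ring] at h
  calc kernelIntegral 0 (x / 4) ^ 4 ≤ (exp (-(x / 4)) * (8 * (x / 8) ^ (-(1/4) : ℝ))) ^ 4 := by
        gcongr; exact kernelIntegral_nonneg 0 _
    _ = 8 ^ 5 * exp (-x) / x := by
        rw [mul_pow, mul_pow, ← exp_nat_mul, ← rpow_natCast ((x / 8) ^ (-(1/4) : ℝ)) 4,
          ← rpow_mul hx8.le, show (-(1/4) : ℝ) * ((4 : ℕ) : ℝ) = -1 by norm_num,
          rpow_neg_one,
          show ((4 : ℕ) : ℝ) * -(x / 4) = -x by push_cast; ring]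
        field_simp

lemma K0_eq_kernelIntegral (x : ℝ) : K0 x = kernelIntegral 0 (x / 2) / 2 := by
  simp only [K0, kernelIntegral, kernel, pow_zero, one_mul]
  ring

lemma hasDerivAt_kernelIntegral_half (j : ℕ) {x : ℝ} (hx : 0 < x) :
    HasDerivAt (fun y => kernelIntegral j (y / 2)) (-kernelIntegral (j + 1) (x / 2) / 2) x := by
  simpa [Function.comp_def, div_eq_mul_inv] using
    (hasDerivAt_kernelIntegral j (half_pos hx)).comp x ((hasDerivAt_id x).div_const 2)

lemma hasDerivAt_K0 {x : ℝ} (hx : 0 < x) : HasDerivAt K0 (-kernelIntegral 1 (x / 2) / 4) x := by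
  rw [funext K0_eq_kernelIntegral]
  exact ((hasDerivAt_kernelIntegral_half 0 hx).div_const 2).congr_deriv (by ring)

lemma deriv_K0 {x : ℝ} (hx : 0 < x) : deriv K0 x = -kernelIntegral 1 (x / 2) / 4 :=
  (hasDerivAt_K0 hx).deriv

lemma hasDerivAt_mul_deriv_K0 {x : ℝ} (hx : 0 < x) :
    HasDerivAt (fun y => y * deriv K0 y) (x * K0 x) x := by
  have h := (hasDerivAt_id' x).fun_mul ((hasDerivAt_kernelIntegral_half 1 hx).fun_neg.div_const 4)
  refine (h.congr_of_eventuallyEq ?_).congr_deriv ?_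
  · filter_upwards [Ioi_mem_nhds hx] with y hy
    rw [deriv_K0 hy]
  · rw [K0_eq_kernelIntegral]
    have := kernelIntegral_bessel (half_pos hx)
    linear_combination (1/4 : ℝ) * this

lemma abs_K0_le {x : ℝ} (hx : 0 < x) : |K0 x| ≤ kernelIntegral 0 (x / 4) := by
  have h := kernelIntegral_zero_two_mul_le (b := x / 4) (by positivity)
  rw [show 2 * (x / 4) = x / 2 by ring] at h
  have := mul_le_of_le_one_left (kernelIntegral_nonneg 0 (x / 4))
    (exp_le_one_iff.2 (by linarith : -(x / 2) ≤ 0))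
  rw [K0_eq_kernelIntegral, abs_of_nonneg (by have := kernelIntegral_nonneg 0 (x / 2); positivity)]
  linarith [kernelIntegral_nonneg 0 (x / 2)]

lemma abs_mul_deriv_K0_le {x : ℝ} (hx : 0 < x) :
    |x * deriv K0 x| ≤ kernelIntegral 0 (x / 4) := by
  have h := mul_kernelIntegral_one_two_mul_le (a := x / 4) (by positivity)
  rw [show 2 * (x / 4) = x / 2 by ring] at h
  have := mul_nonneg hx.le (kernelIntegral_nonneg 1 (x / 2))
  rw [deriv_K0 hx, abs_le]
  constructor <;> linarith

lemma continuousOn_K0 : ContinuousOn K0 (Ioi 0) :=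
  fun _ hx => (hasDerivAt_K0 hx).continuousAt.continuousWithinAt

lemma continuousOn_mul_deriv_K0 : ContinuousOn (fun x => x * deriv K0 x) (Ioi 0) :=
  fun _ hx => (hasDerivAt_mul_deriv_K0 hx).continuousAt.continuousWithinAt

noncomputable def moment (a b n : ℕ) : ℝ :=
  ∫ x in Ioi 0, x ^ n * K0 x ^ a * (x * deriv K0 x) ^ b

lemma abs_pow_mul_K0_pow_le {a b : ℕ} (hab : a + b = 4) (m : ℕ) {x : ℝ} (hx : 0 < x) :
    |x ^ (m + 1) * K0 x ^ a * (x * deriv K0 x) ^ b| ≤ 8 ^ 5 * (x ^ m * exp (-x)) := by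
  have hN := kernelIntegral_nonneg 0 (x / 4)
  calc |x ^ (m + 1) * K0 x ^ a * (x * deriv K0 x) ^ b|
      = x ^ (m + 1) * (|K0 x| ^ a * |x * deriv K0 x| ^ b) := by
        rw [abs_mul, abs_mul, abs_pow, abs_pow, abs_pow, abs_of_pos hx, mul_assoc]
    _ ≤ x ^ (m + 1) * (kernelIntegral 0 (x / 4) ^ a * kernelIntegral 0 (x / 4) ^ b) := by
        gcongr
        exacts [abs_K0_le hx, abs_mul_deriv_K0_le hx]
    _ ≤ x ^ (m + 1) * (8 ^ 5 * exp (-x) / x) := by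
        rw [← pow_add, hab]
        gcongr
        exact kernelIntegral_zero_pow_four_le hx
    _ = 8 ^ 5 * (x ^ m * exp (-x)) := by
        field_simp
        ring

lemma continuousOn_momentIntegrand (a b m : ℕ) :
    ContinuousOn (fun x => x ^ m * K0 x ^ a * (x * deriv K0 x) ^ b) (Ioi 0) :=
  ((continuousOn_pow m).mul (continuousOn_K0.pow a)).mul (continuousOn_mul_deriv_K0.pow b)

lemma integrableOn_momentIntegrand {a b : ℕ} (hab : a + b = 4) {m : ℕ} (hm : 1 ≤ m) :
    IntegrableOn (fun x => x ^ m * K0 x ^ a * (x * deriv K0 x) ^ b) (Ioi 0) := by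
  obtain ⟨m, rfl⟩ := Nat.exists_eq_add_of_le' hm
  refine Integrable.mono' ((integrableOn_pow_mul_exp_neg_Ioi m).const_mul (8 ^ 5))
    ((continuousOn_momentIntegrand a b _).aestronglyMeasurable measurableSet_Ioi) ?_
  filter_upwards [ae_restrict_mem measurableSet_Ioi] with x (hx : 0 < x)
  exact abs_pow_mul_K0_pow_le hab m hx

lemma tendsto_momentIntegrand_nhdsGT {a b : ℕ} (hab : a + b = 4) {m : ℕ} (hm : 2 ≤ m) :
    Tendsto (fun x => x ^ m * K0 x ^ a * (x * deriv K0 x) ^ b) (𝓝[>] 0) (𝓝 0) := by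
  obtain ⟨m, rfl⟩ := Nat.exists_eq_add_of_le' (one_le_two.trans hm)
  have hlim : Tendsto (fun x : ℝ => 8 ^ 5 * (x ^ m * exp (-x))) (𝓝[>] 0) (𝓝 0) := by
    have : Continuous (fun x : ℝ => 8 ^ 5 * (x ^ m * exp (-x))) := by fun_prop
    simpa [zero_pow (by omega : m ≠ 0)] using
      (this.continuousWithinAt (s := Ioi 0) (x := 0)).tendsto
  exact squeeze_zero_norm' (eventually_mem_nhdsWithin.mono fun x hx =>
    abs_pow_mul_K0_pow_le hab m hx) hlim

lemma tendsto_momentIntegrand_atTop {a b : ℕ} (hab : a + b = 4) {m : ℕ} (hm : 1 ≤ m) :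
    Tendsto (fun x => x ^ m * K0 x ^ a * (x * deriv K0 x) ^ b) atTop (𝓝 0) := by
  obtain ⟨m, rfl⟩ := Nat.exists_eq_add_of_le' hm
  have hlim := (tendsto_pow_mul_exp_neg_atTop_nhds_zero m).const_mul (8 ^ 5 : ℝ)
  rw [mul_zero] at hlim
  exact squeeze_zero_norm' ((eventually_gt_atTop 0).mono fun x hx =>
    abs_pow_mul_K0_pow_le hab m hx) hlim

lemma integrableOn_natCast_mul_momentIntegrand (c : ℕ) {a b : ℕ} (hab : c ≠ 0 → a + b = 4)
    {m : ℕ} (hm : 1 ≤ m) :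
    IntegrableOn (fun x => (c : ℝ) * (x ^ m * K0 x ^ a * (x * deriv K0 x) ^ b)) (Ioi 0) := by
  rcases eq_or_ne c 0 with rfl | hc
  · simp
  · exact (integrableOn_momentIntegrand (hab hc) hm).const_mul _

lemma moment_integration_by_parts {a b : ℕ} (hab : a + b = 4) {n : ℕ} (hn : 1 ≤ n) :
    (n + 1 : ℝ) * moment a b n + a * moment (a - 1) (b + 1) n + b * moment (a + 1) (b - 1) (n + 2)
      = 0 := by
  have hderiv : ∀ x ∈ Ioi (0:ℝ),
      HasDerivAt (fun y => y ^ (n + 1) * K0 y ^ a * (y * deriv K0 y) ^ b)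
      ((n + 1 : ℝ) * (x ^ n * K0 x ^ a * (x * deriv K0 x) ^ b)
        + a * (x ^ n * K0 x ^ (a - 1) * (x * deriv K0 x) ^ (b + 1))
        + b * (x ^ (n + 2) * K0 x ^ (a + 1) * (x * deriv K0 x) ^ (b - 1))) x :=
    fun x (hx : 0 < x) => by
      have h := (((hasDerivAt_pow (n + 1) x).fun_mul
        ((hasDerivAt_K0 hx).differentiableAt.hasDerivAt.fun_pow a)).fun_mul
        ((hasDerivAt_mul_deriv_K0 hx).fun_pow b))
      refine h.congr_deriv ?_
      rw [pow_succ _ b, pow_succ _ a, pow_succ x n, show n + 2 = n + 1 + 1 by ring,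
        pow_succ x (n + 1)]
      push_cast
      ring
  have i₁ := integrableOn_natCast_mul_momentIntegrand (n + 1) (fun _ => hab) hn
  have i₂ := integrableOn_natCast_mul_momentIntegrand a (a := a - 1) (b := b + 1)
    (fun h => by omega) hn
  have i₃ := integrableOn_natCast_mul_momentIntegrand b (a := a + 1) (b := b - 1)
    (fun h => by omega) (m := n + 2) (by omega)
  push_cast at i₁
  have h := integral_Ioi_of_hasDerivAt_of_tendsto_nhdsGT hderiv (i₁.fun_add i₂ |>.fun_add i₃)
    (tendsto_momentIntegrand_nhdsGT hab (by omega)) (tendsto_momentIntegrand_atTop hab (by omega))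
  rw [integral_add (i₁.fun_add i₂) i₃, integral_add i₁ i₂, integral_const_mul,
    integral_const_mul, integral_const_mul] at h
  simpa [moment] using h

lemma moment_four_zero_recurrence {n : ℕ} (hn : 1 ≤ n) :
    (n + 1 : ℝ) ^ 5 * moment 4 0 n - 4 * (n + 2) * (5 * n ^ 2 + 20 * n + 23) * moment 4 0 (n + 2)
      + 64 * (n + 3) * moment 4 0 (n + 4) = 0 := by
  have h40 := moment_integration_by_parts (a := 4) (b := 0) rfl hn
  have h40' := moment_integration_by_parts (a := 4) (b := 0) rfl (n := n + 2) (by omega)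
  have h40'' := moment_integration_by_parts (a := 4) (b := 0) rfl (n := n + 4) (by omega)
  have h31 := moment_integration_by_parts (a := 3) (b := 1) rfl hn
  have h31' := moment_integration_by_parts (a := 3) (b := 1) rfl (n := n + 2) (by omega)
  have h22 := moment_integration_by_parts (a := 2) (b := 2) rfl hn
  have h22' := moment_integration_by_parts (a := 2) (b := 2) rfl (n := n + 2) (by omega)
  have h13 := moment_integration_by_parts (a := 1) (b := 3) rfl hn
  have h04 := moment_integration_by_parts (a := 0) (b := 4) rfl hn
  simp only [add_assoc, Nat.reduceAdd, Nat.reduceSub] at *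
  push_cast at *
  linear_combination (n + 1 : ℝ) ^ 4 * h40 - (16 * n ^ 2 + 60 * n + 60 : ℝ) * h40' + 24 * h40''
    - 4 * (n + 1 : ℝ) ^ 3 * h31 + 12 * (n + 1 : ℝ) ^ 2 * h22 + (40 * n + 72 : ℝ) * h31'
    - 48 * h22' - 24 * (n + 1 : ℝ) * h13 + 24 * h04

end BesselK0

open BesselK0

lemma besselMoment_eq_moment (k : ℕ) :
    besselMoment k = 8 / (4 ^ k * (k ! : ℝ) ^ 2) * moment 4 0 (2 * k + 1) := by
  have h : ∫ x in Ioi (0:ℝ), (x / 2) ^ (2 * k + 1) * K0 x ^ 4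
      = (2 ^ (2 * k + 1))⁻¹ * moment 4 0 (2 * k + 1) := by
    rw [moment, ← integral_const_mul]
    congr 1 with x
    rw [div_pow]
    ring
  rw [besselMoment, h, pow_succ _ (2 * k), pow_mul]
  field_simp
  ring

theorem stmt4 (k : ℕ) :
    ((k:ℝ)+1)^3 * besselMoment k
      - 2*(2*(k:ℝ)+3)*(5*(k:ℝ)^2+15*(k:ℝ)+12) * besselMoment (k+1)
      + 64*((k:ℝ)+2)^3 * besselMoment (k+2) = 0 := by
  have h := moment_four_zero_recurrence (n := 2 * k + 1) (by omega)
  rw [besselMoment_eq_moment, besselMoment_eq_moment, besselMoment_eq_moment,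
    show 2 * (k + 1) + 1 = 2 * k + 1 + 2 by ring, show 2 * (k + 2) + 1 = 2 * k + 1 + 4 by ring,
    Nat.factorial_succ (k + 1), Nat.factorial_succ k]
  push_cast at h ⊢
  field_simp
  linear_combination (4 ^ (k + 1) * 4 ^ (k + 2) * ((k : ℝ) + 2) ^ 2 / 4) * h
end

section
/- For every integer n ≥ 1, n³·∑_{m|n} ψ(m)/m³ = 48·( −σ₃(n) + 16·σ₃(n/2)·[2∣n] + 9·σ₃(n/3)·[3∣n] − 144·σ₃(n/6)·[6∣n] ), where σ₃(k) := ∑_{d|k} d³ and [d∣n] equals 1 if d divides n and 0 otherwise. Equivalently, the coefficient of qⁿ in the q-expansion of (1/5)(−E₄(q) + 16E₄(q²) + 9E₄(q³) − 144E₄(q⁶)), with E₄(q) = 1 + 240∑_{k≥1}σ₃(k)qᵏ, equals n³·∑_{m|n} ψ(m)/m³. -/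
/-!
Since `ψ(m) = 48 (-1 + 16·[2 ∣ m] + 9·[3 ∣ m] - 144·[6 ∣ m])`, after writing
`n³ ψ(m) / m³ = ψ(m) (n/m)³` the sum splits into four sums of `(n/m)³` over the divisors `m` of
`n` that are multiples of `k ∈ {1, 2, 3, 6}`; substituting `m = n/d`, each is `σ₃(n/k)` if `k ∣ n`
and `0` otherwise.
-/

/-- The even mod-6 character `ψ` with `ψ(1)=ψ(5)=−48`, `ψ(2)=ψ(4)=720`,
`ψ(3)=384`, `ψ(6)=−5760` (6-periodic). -/
def psi (n : ℕ) : ℤ :=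
  if n % 6 = 1 then -48 else if n % 6 = 2 then 720 else if n % 6 = 3 then 384
  else if n % 6 = 4 then 720 else if n % 6 = 5 then -48 else -5760

/-- Sum of cubes of divisors: `σ₃(n) = ∑_{d|n} d³`. -/
def sigma3 (n : ℕ) : ℕ := ∑ d ∈ n.divisors, d^3

open Finset

lemma psi_eq_boole (m : ℕ) :
    (psi m : ℚ) = 48 * (-1 + 16 * (if 2 ∣ m then 1 else 0) + 9 * (if 3 ∣ m then 1 else 0)
      - 144 * (if 6 ∣ m then 1 else 0)) := by
  have h2 : 2 ∣ m ↔ m % 6 % 2 = 0 := by omega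
  have h3 : 3 ∣ m ↔ m % 6 % 3 = 0 := by omega
  have h6 : 6 ∣ m ↔ m % 6 = 0 := by omega
  have hlt : m % 6 < 6 := Nat.mod_lt m (by norm_num)
  simp only [psi, h2, h3, h6]
  interval_cases m % 6 <;> norm_num

theorem Nat.sum_divisors_ite_dvd_div {M : Type*} [AddCommMonoid M] (f : ℕ → M) (k n : ℕ) :
    ∑ m ∈ n.divisors, (if k ∣ m then f (n / m) else 0) =
      if k ∣ n then ∑ d ∈ (n / k).divisors, f d else 0 := by
  rcases eq_or_ne n 0 with rfl | hn
  · simp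
  split_ifs with hkn
  · rw [← Nat.sum_div_divisors n, ← Nat.divisors_filter_dvd_of_dvd hn (Nat.div_dvd_of_dvd hkn),
      sum_filter]
    refine sum_congr rfl fun d hd => ?_
    have hdn := Nat.dvd_of_mem_divisors hd
    rw [Nat.div_div_self hdn hn]
    congr 1
    rw [Nat.dvd_div_iff_mul_dvd hdn, Nat.dvd_div_iff_mul_dvd hkn, mul_comm]
  · exact sum_eq_zero fun m hm => if_neg fun hkm => hkn (hkm.trans (Nat.dvd_of_mem_divisors hm))

lemma cast_sigma3 (n : ℕ) : (sigma3 n : ℚ) = ∑ d ∈ n.divisors, (d : ℚ) ^ 3 := by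
  simp [sigma3]

lemma Nat.cast_pow_mul_div_pow_of_dvd {K : Type*} [Field K] [CharZero K] {m n : ℕ} (h : m ∣ n)
    (k : ℕ) (x : K) : (n : K) ^ k * (x / (m : K) ^ k) = x * ((n / m : ℕ) : K) ^ k := by
  rcases eq_or_ne m 0 with rfl | hm
  · cases k <;> simp [Nat.eq_zero_of_zero_dvd h]
  rw [Nat.cast_div h (Nat.cast_ne_zero.mpr hm)]
  ring

theorem stmt6_general (n : ℕ) :
    (n:ℚ)^3 * ∑ m ∈ n.divisors, (psi m : ℚ) / (m:ℚ)^3 =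
    48 * (-(sigma3 n : ℚ)
      + 16 * (if 2 ∣ n then (sigma3 (n/2) : ℚ) else 0)
      + 9 * (if 3 ∣ n then (sigma3 (n/3) : ℚ) else 0)
      - 144 * (if 6 ∣ n then (sigma3 (n/6) : ℚ) else 0)) := by
  have hterm : ∀ m ∈ n.divisors, (n : ℚ) ^ 3 * ((psi m : ℚ) / (m : ℚ) ^ 3) =
      48 * (-((n / m : ℕ) : ℚ) ^ 3
        + 16 * (if 2 ∣ m then ((n / m : ℕ) : ℚ) ^ 3 else 0)
        + 9 * (if 3 ∣ m then ((n / m : ℕ) : ℚ) ^ 3 else 0)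
        - 144 * (if 6 ∣ m then ((n / m : ℕ) : ℚ) ^ 3 else 0)) := fun m hm => by
    rw [Nat.cast_pow_mul_div_pow_of_dvd (Nat.dvd_of_mem_divisors hm), psi_eq_boole]
    split_ifs <;> ring
  rw [mul_sum, sum_congr rfl hterm, ← mul_sum, sum_sub_distrib, sum_add_distrib, sum_add_distrib,
    sum_neg_distrib, ← mul_sum, ← mul_sum, ← mul_sum, Nat.sum_div_divisors n fun d => (d : ℚ) ^ 3]
  simp only [Nat.sum_divisors_ite_dvd_div (fun d => (d : ℚ) ^ 3), cast_sigma3]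

theorem stmt6 (n : ℕ) (hn : 1 ≤ n) :
    (n:ℚ)^3 * ∑ m ∈ n.divisors, (psi m : ℚ) / (m:ℚ)^3 =
    48 * (-(sigma3 n : ℚ)
      + 16 * (if 2 ∣ n then (sigma3 (n/2) : ℚ) else 0)
      + 9 * (if 3 ∣ n then (sigma3 (n/3) : ℚ) else 0)
      - 144 * (if 6 ∣ n then (sigma3 (n/6) : ℚ) else 0)) :=
  stmt6_general n
end

section
/- Let t be a complex number with |t| > 16. Then (1/(2π)³) ∫_{[0,2π]³} [ (1 + e^{iθ₁} + e^{iθ₂} + e^{iθ₃})(1 + e^{−iθ₁} + e^{−iθ₂} + e^{−iθ₃}) − t ]^{−1} dθ₁ dθ₂ dθ₃ = − ∑_{n≥0} t^{−n−1} · ∑_{p+q+r+s=n} ( n!/(p!q!r!s!) )², where the sum over (p,q,r,s) runs over quadruples of nonnegative integers summing to n, and the series converges absolutely. -/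
/-!
On the torus `|(1 + x + y + z)(1 + 1/x + 1/y + 1/z)| ≤ 16 < |t|`, so the integrand is the
uniformly convergent geometric series `-∑ P^n / t^(n+1)` and may be integrated termwise
(dominated convergence in each of the three variables). Writing `P^n = A^n · Ā^n` with
`A = 1 + x + y + z` and expanding `A^n` by the multinomial theorem, orthogonality of the
characters `e^{ikθ}` leaves `(2π)³ ∑ multinomial(c)²` as the integral of `P^n`. The same
identity bounds these coefficients by `16^n`, which gives absolute convergence.
-/

open Complex Finset intervalIntegral
open scoped Real

section CubeIntegral

variable {E : Type*} [NormedAddCommGroup E] [NormedSpace ℝ E]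

theorem hasSum_intervalIntegral_of_norm_le {ι : Type*} [Countable ι] {F : ι → ℝ → E}
    {f : ℝ → E} {C : ι → ℝ} {a b : ℝ} (hF : ∀ i, Continuous (F i)) (hFC : ∀ i x, ‖F i x‖ ≤ C i)
    (hC : Summable C) (hf : ∀ x, HasSum (fun i => F i x) (f x)) :
    HasSum (fun i => ∫ x in a..b, F i x) (∫ x in a..b, f x) :=
  hasSum_integral_of_dominated_convergence (fun i _ => C i) (fun i => (hF i).aestronglyMeasurable)
    (fun i => .of_forall fun x _ => hFC i x) (.of_forall fun _ _ => hC) intervalIntegrable_const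
    (.of_forall fun x _ => hf x)

noncomputable def cubeIntegral (a b : ℝ) (G : ℝ → ℝ → ℝ → E) : E :=
  ∫ x in a..b, ∫ y in a..b, ∫ z in a..b, G x y z

variable {a b : ℝ}

theorem norm_cubeIntegral_le {G : ℝ → ℝ → ℝ → E} {C : ℝ} (h : ∀ x y z, ‖G x y z‖ ≤ C) :
    ‖cubeIntegral a b G‖ ≤ C * |b - a| ^ 3 := by
  have h₂ (x y : ℝ) : ‖∫ z in a..b, G x y z‖ ≤ C * |b - a| :=
    norm_integral_le_of_norm_le_const fun z _ => h x y z
  have h₁ (x : ℝ) : ‖∫ y in a..b, ∫ z in a..b, G x y z‖ ≤ C * |b - a| * |b - a| :=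
    norm_integral_le_of_norm_le_const fun y _ => h₂ x y
  calc ‖cubeIntegral a b G‖ ≤ C * |b - a| * |b - a| * |b - a| :=
        norm_integral_le_of_norm_le_const fun x _ => h₁ x
    _ = C * |b - a| ^ 3 := by ring

theorem hasSum_cubeIntegral_of_norm_le {ι : Type*} [Countable ι] {G : ι → ℝ → ℝ → ℝ → E}
    {g : ℝ → ℝ → ℝ → E} {C : ι → ℝ} (hG : ∀ i, Continuous fun p : ℝ × ℝ × ℝ => G i p.1 p.2.1 p.2.2)
    (hGC : ∀ i x y z, ‖G i x y z‖ ≤ C i) (hC : Summable C)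
    (hg : ∀ x y z, HasSum (fun i => G i x y z) (g x y z)) :
    HasSum (fun i => cubeIntegral a b (G i)) (cubeIntegral a b g) := by
  have h₂ (x y : ℝ) : HasSum (fun i => ∫ z in a..b, G i x y z) (∫ z in a..b, g x y z) :=
    hasSum_intervalIntegral_of_norm_le (fun i => by fun_prop) (fun i => hGC i x y) hC (hg x y)
  have h₁ (x : ℝ) : HasSum (fun i => ∫ y in a..b, ∫ z in a..b, G i x y z)
      (∫ y in a..b, ∫ z in a..b, g x y z) :=
    hasSum_intervalIntegral_of_norm_le (fun i => by fun_prop)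
      (fun i y => norm_integral_le_of_norm_le_const fun z _ => hGC i x y z)
      (hC.mul_right _) (h₂ x)
  exact hasSum_intervalIntegral_of_norm_le (fun i => by fun_prop)
    (fun i x => norm_integral_le_of_norm_le_const fun y _ =>
      norm_integral_le_of_norm_le_const fun z _ => hGC i x y z)
    ((hC.mul_right _).mul_right _) h₁

theorem cubeIntegral_finset_sum {ι : Type*} (s : Finset ι) {G : ι → ℝ → ℝ → ℝ → E}
    (hG : ∀ i, Continuous fun p : ℝ × ℝ × ℝ => G i p.1 p.2.1 p.2.2) :
    cubeIntegral a b (fun x y z => ∑ i ∈ s, G i x y z) = ∑ i ∈ s, cubeIntegral a b (G i) := by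
  have h₂ (x y : ℝ) : ∫ z in a..b, ∑ i ∈ s, G i x y z = ∑ i ∈ s, ∫ z in a..b, G i x y z :=
    integral_finsetSum fun i _ => Continuous.intervalIntegrable (by fun_prop) _ _
  have h₁ (x : ℝ) : ∫ y in a..b, ∑ i ∈ s, ∫ z in a..b, G i x y z =
      ∑ i ∈ s, ∫ y in a..b, ∫ z in a..b, G i x y z :=
    integral_finsetSum fun i _ => Continuous.intervalIntegrable (by fun_prop) _ _
  simp only [cubeIntegral, h₂, h₁]
  exact integral_finsetSum fun i _ => Continuous.intervalIntegrable (by fun_prop) _ _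

end CubeIntegral

section RCLike

variable {𝕜 : Type*} [RCLike 𝕜] {a b : ℝ}

theorem cubeIntegral_const_mul (c : 𝕜) (G : ℝ → ℝ → ℝ → 𝕜) :
    cubeIntegral a b (fun x y z => c * G x y z) = c * cubeIntegral a b G := by
  simp only [cubeIntegral, intervalIntegral.integral_const_mul]

theorem cubeIntegral_const_mul_mul_mul (c : 𝕜) (f g h : ℝ → 𝕜) :
    cubeIntegral a b (fun x y z => c * (f x * g y * h z)) =
      c * ((∫ x in a..b, f x) * (∫ y in a..b, g y) * ∫ z in a..b, h z) := by
  simp only [cubeIntegral, ← mul_assoc, intervalIntegral.integral_const_mul,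
    intervalIntegral.integral_mul_const]

end RCLike

theorem Nat.cast_multinomial_eq_div {α K : Type*} [Semifield K] [CharZero K] (s : Finset α)
    (f : α → ℕ) :
    (Nat.multinomial s f : K) = (∑ i ∈ s, f i).factorial / ∏ i ∈ s, ((f i).factorial : K) := by
  rw [eq_div_iff (prod_ne_zero_iff.mpr fun i _ => Nat.cast_ne_zero.mpr (Nat.factorial_ne_zero _)),
    ← Nat.multinomial_spec]
  push_cast
  exact mul_comm _ _

theorem Finset.sum_pow_mul_sum_inv_pow {ι K : Type*} [DecidableEq ι] [Field K] (s : Finset ι)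
    (w : ι → K) (hw : ∀ i ∈ s, w i ≠ 0) (n : ℕ) :
    (∑ i ∈ s, w i) ^ n * (∑ i ∈ s, (w i)⁻¹) ^ n =
      ∑ c ∈ s.piAntidiag n, ∑ d ∈ s.piAntidiag n,
        (Nat.multinomial s c * Nat.multinomial s d : K) * ∏ i ∈ s, w i ^ ((c i : ℤ) - d i) := by
  rw [sum_pow_eq_sum_piAntidiag, sum_pow_eq_sum_piAntidiag, sum_mul_sum]
  refine sum_congr rfl fun c _ => sum_congr rfl fun d _ => ?_
  rw [mul_mul_mul_comm, ← prod_mul_distrib]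
  congr 1
  refine prod_congr rfl fun i hi => ?_
  rw [zpow_sub₀ (hw i hi), zpow_natCast, zpow_natCast, inv_pow, div_eq_mul_inv]

theorem integral_exp_I_mul_zpow (k : ℤ) :
    ∫ θ in (0 : ℝ)..2 * π, exp (I * θ) ^ k = if k = 0 then (2 * π : ℂ) else 0 := by
  split_ifs with hk
  · simp [hk]
  have hkI : (k : ℂ) * I ≠ 0 := by simp [hk, I_ne_zero]
  simp_rw [← exp_int_mul, ← mul_assoc]
  rw [integral_exp_mul_complex hkI]
  have : (k : ℂ) * I * (2 * π) = k * (2 * π * I) := by ring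
  simp [this, exp_int_mul_two_pi_mul_I]

theorem hasSum_neg_inv_pow_succ_mul_pow {K : Type*} [NormedField K] {w t : K}
    (h : ‖w‖ < ‖t‖) : HasSum (fun n : ℕ => -(t ^ (n + 1))⁻¹ * w ^ n) (w - t)⁻¹ := by
  have ht : t ≠ 0 := norm_pos_iff.mp ((norm_nonneg w).trans_lt h)
  have hq : ‖w / t‖ < 1 := by rwa [norm_div, div_lt_one ((norm_nonneg w).trans_lt h)]
  have hterm (n : ℕ) : -t⁻¹ * (w / t) ^ n = -(t ^ (n + 1))⁻¹ * w ^ n := by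
    rw [div_pow, pow_succ]; field_simp
  have hval : -t⁻¹ * (1 - w / t)⁻¹ = (w - t)⁻¹ := by
    rw [one_sub_div ht, inv_div, ← neg_sub t w, inv_neg]; field_simp
  simpa only [hterm, hval] using (hasSum_geometric_of_norm_lt_one hq).mul_left (-t⁻¹)

theorem norm_inv_pow_succ_mul_le {K : Type*} [NormedField K] {t x : K} {R : ℝ} {n : ℕ}
    (hx : ‖x‖ ≤ R ^ n) : ‖(t ^ (n + 1))⁻¹ * x‖ ≤ ‖t‖⁻¹ * (R / ‖t‖) ^ n :=
  calc ‖(t ^ (n + 1))⁻¹ * x‖ = ‖t‖⁻¹ * (‖t‖ ^ n)⁻¹ * ‖x‖ := by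
        rw [norm_mul, norm_inv, norm_pow, pow_succ, mul_inv, mul_comm (‖t‖ ^ n)⁻¹]
    _ ≤ ‖t‖⁻¹ * (‖t‖ ^ n)⁻¹ * R ^ n := by gcongr
    _ = ‖t‖⁻¹ * (R / ‖t‖) ^ n := by rw [div_pow]; ring

theorem Finset.Nat.eq_of_mem_antidiagonalTuple_of_tail_eq {k n : ℕ} {c d : Fin (k + 1) → ℕ}
    (hc : c ∈ Nat.antidiagonalTuple (k + 1) n) (hd : d ∈ Nat.antidiagonalTuple (k + 1) n)
    (h : ∀ i : Fin k, c i.succ = d i.succ) : c = d := by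
  rw [Nat.mem_antidiagonalTuple, Fin.sum_univ_succ] at hc hd
  simp only [h] at hc
  exact funext (Fin.cases (by omega) h)

noncomputable def bananaSymbol (θ₁ θ₂ θ₃ : ℝ) : ℂ :=
  (1 + exp (I * θ₁) + exp (I * θ₂) + exp (I * θ₃)) *
    (1 + exp (-(I * θ₁)) + exp (-(I * θ₂)) + exp (-(I * θ₃)))

noncomputable def bananaCoeff (n : ℕ) : ℂ :=
  ∑ c ∈ Nat.antidiagonalTuple 4 n, ((n.factorial : ℂ) / ∏ i, ((c i).factorial : ℂ)) ^ 2

theorem bananaSymbol_eq_sum_mul_sum_inv (θ₁ θ₂ θ₃ : ℝ) :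
    bananaSymbol θ₁ θ₂ θ₃ =
      (∑ i, ![1, exp (I * θ₁), exp (I * θ₂), exp (I * θ₃)] i) *
        ∑ i, (![1, exp (I * θ₁), exp (I * θ₂), exp (I * θ₃)] i)⁻¹ := by
  simp [bananaSymbol, Fin.sum_univ_four, exp_neg]

theorem norm_bananaSymbol_le (θ₁ θ₂ θ₃ : ℝ) : ‖bananaSymbol θ₁ θ₂ θ₃‖ ≤ 16 := by
  have h (ψ₁ ψ₂ ψ₃ : ℝ) : ‖1 + exp (I * ψ₁) + exp (I * ψ₂) + exp (I * ψ₃)‖ ≤ 4 :=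
    norm_add₄_le.trans_eq (by simp only [norm_one, norm_exp_I_mul_ofReal]; norm_num)
  have h' := h (-θ₁) (-θ₂) (-θ₃)
  push_cast [mul_neg] at h'
  rw [bananaSymbol, norm_mul]
  nlinarith [h θ₁ θ₂ θ₃, norm_nonneg (1 + exp (I * θ₁) + exp (I * θ₂) + exp (I * θ₃))]

theorem norm_bananaSymbol_pow_le (n : ℕ) (θ₁ θ₂ θ₃ : ℝ) :
    ‖bananaSymbol θ₁ θ₂ θ₃ ^ n‖ ≤ 16 ^ n :=
  (norm_pow _ n).trans_le (pow_le_pow_left₀ (norm_nonneg _) (norm_bananaSymbol_le θ₁ θ₂ θ₃) n)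

theorem continuous_bananaSymbol :
    Continuous fun p : ℝ × ℝ × ℝ => bananaSymbol p.1 p.2.1 p.2.2 := by
  unfold bananaSymbol; fun_prop

theorem cubeIntegral_bananaSymbol_pow (n : ℕ) :
    cubeIntegral 0 (2 * π) (fun θ₁ θ₂ θ₃ => bananaSymbol θ₁ θ₂ θ₃ ^ n) =
      ((2 * π) ^ 3 : ℝ) * bananaCoeff n := by
  have hexpand (θ₁ θ₂ θ₃ : ℝ) : bananaSymbol θ₁ θ₂ θ₃ ^ n =
      ∑ c ∈ Nat.antidiagonalTuple 4 n, ∑ d ∈ Nat.antidiagonalTuple 4 n,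
        (Nat.multinomial univ c * Nat.multinomial univ d : ℂ) *
          (exp (I * θ₁) ^ ((c 1 : ℤ) - d 1) * exp (I * θ₂) ^ ((c 2 : ℤ) - d 2) *
            exp (I * θ₃) ^ ((c 3 : ℤ) - d 3)) := by
    rw [bananaSymbol_eq_sum_mul_sum_inv, mul_pow,
      sum_pow_mul_sum_inv_pow _ _ (by simp [Fin.forall_fin_succ, exp_ne_zero]),
      piAntidiag_univ_fin_eq_antidiagonalTuple]
    simp [Fin.prod_univ_four, mul_assoc]
  simp only [hexpand, bananaCoeff]
  rw [cubeIntegral_finset_sum _ fun c => by fun_prop (disch := intro; left; apply exp_ne_zero),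
    mul_sum]
  refine sum_congr rfl fun c hc => ?_
  rw [cubeIntegral_finset_sum _ fun d => by fun_prop (disch := intro; left; apply exp_ne_zero)]
  simp only [cubeIntegral_const_mul_mul_mul, integral_exp_I_mul_zpow, sub_eq_zero, Nat.cast_inj]
  -- orthogonality of the characters: only the diagonal term `d = c` survives
  rw [sum_eq_single c]
  · rw [Nat.cast_multinomial_eq_div, Nat.mem_antidiagonalTuple.mp hc]
    simp only [if_true]
    push_cast
    ring
  · intro d hd hdc
    have hne : ¬(c 1 = d 1 ∧ c 2 = d 2 ∧ c 3 = d 3) := fun ⟨h₁, h₂, h₃⟩ =>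
      hdc (Nat.eq_of_mem_antidiagonalTuple_of_tail_eq hd hc (by
        intro i; fin_cases i <;> simp [h₁, h₂, h₃]))
    split_ifs <;> simp_all
  · exact fun h => absurd hc h

theorem norm_bananaCoeff_le (n : ℕ) : ‖bananaCoeff n‖ ≤ 16 ^ n := by
  have h := norm_cubeIntegral_le (a := 0) (b := 2 * π) (norm_bananaSymbol_pow_le n)
  rw [cubeIntegral_bananaSymbol_pow, norm_mul, norm_real, sub_zero,
    Real.norm_of_nonneg (by positivity), abs_of_pos Real.two_pi_pos, mul_comm (16 ^ n : ℝ)] at h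
  exact le_of_mul_le_mul_left h (by positivity)

theorem stmt15 (t : ℂ) (ht : 16 < ‖t‖) :
    Summable (fun n : ℕ => ‖(t^(n+1))⁻¹ *
      ∑ c ∈ Finset.Nat.antidiagonalTuple 4 n,
        ((n.factorial : ℂ) / ∏ i, ((c i).factorial : ℂ))^2‖) ∧
    ((1/(2*Real.pi)^3 : ℝ) : ℂ) *
      (∫ θ₁ in (0:ℝ)..(2*Real.pi), ∫ θ₂ in (0:ℝ)..(2*Real.pi), ∫ θ₃ in (0:ℝ)..(2*Real.pi),
        ((1 + Complex.exp (Complex.I*θ₁) + Complex.exp (Complex.I*θ₂) +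
            Complex.exp (Complex.I*θ₃)) *
         (1 + Complex.exp (-(Complex.I*θ₁)) + Complex.exp (-(Complex.I*θ₂)) +
            Complex.exp (-(Complex.I*θ₃))) - t)⁻¹) =
    -∑' n : ℕ, (t^(n+1))⁻¹ *
      ∑ c ∈ Finset.Nat.antidiagonalTuple 4 n,
        ((n.factorial : ℂ) / ∏ i, ((c i).factorial : ℂ))^2 := by
  have hC : Summable fun n : ℕ => ‖t‖⁻¹ * (16 / ‖t‖) ^ n :=
    (summable_geometric_of_lt_one (by positivity) ((div_lt_one (by linarith)).2 ht)).mul_left _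
  have hterm (n : ℕ) : cubeIntegral 0 (2 * π)
      (fun θ₁ θ₂ θ₃ => -(t ^ (n + 1))⁻¹ * bananaSymbol θ₁ θ₂ θ₃ ^ n) =
        -((2 * π) ^ 3 : ℝ) * ((t ^ (n + 1))⁻¹ * bananaCoeff n) := by
    rw [cubeIntegral_const_mul, cubeIntegral_bananaSymbol_pow]
    ring
  have hsum : HasSum (fun n => -((2 * π) ^ 3 : ℝ) * ((t ^ (n + 1))⁻¹ * bananaCoeff n))
      (cubeIntegral 0 (2 * π) fun θ₁ θ₂ θ₃ => (bananaSymbol θ₁ θ₂ θ₃ - t)⁻¹) := by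
    simp only [← hterm]
    exact hasSum_cubeIntegral_of_norm_le
      (fun n => continuous_const.mul (continuous_bananaSymbol.pow n))
      (fun n θ₁ θ₂ θ₃ => by
        rw [neg_mul, norm_neg]
        exact norm_inv_pow_succ_mul_le (norm_bananaSymbol_pow_le n θ₁ θ₂ θ₃))
      hC
      (fun θ₁ θ₂ θ₃ => hasSum_neg_inv_pow_succ_mul_pow
        ((norm_bananaSymbol_le θ₁ θ₂ θ₃).trans_lt ht))
  refine ⟨hC.of_nonneg_of_le (fun _ => norm_nonneg _)
    fun n => norm_inv_pow_succ_mul_le (norm_bananaCoeff_le n), ?_⟩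
  change ((1 / (2 * π) ^ 3 : ℝ) : ℂ) *
      cubeIntegral 0 (2 * π) (fun θ₁ θ₂ θ₃ => (bananaSymbol θ₁ θ₂ θ₃ - t)⁻¹) =
    -∑' n, (t ^ (n + 1))⁻¹ * bananaCoeff n
  rw [← hsum.tsum_eq, tsum_mul_left, ← mul_assoc, mul_neg, ← ofReal_mul,
    one_div_mul_cancel (by positivity), ofReal_one, neg_mul, one_mul]
end

section
/- The Dirichlet series of ψ satisfies ∑_{n≥1} ψ(n)/n³ = 32·ζ(3) and ∑_{n≥1} ψ(n)/n⁴ = 0, both series converging absolutely. -/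
/-- `ζ(3) = ∑_{k≥1} 1/k³`. -/
noncomputable def zeta3 : ℝ := ∑' k : ℕ, 1 / ((k:ℝ)+1)^3

lemma base_summable (s : ℕ) (hs : 2 ≤ s) :
    Summable (fun n : ℕ => 1 / ((n:ℝ)+1)^s) := by
  have h0 := (Real.summable_one_div_nat_pow (p := s)).mpr hs
  have h := (summable_nat_add_iff 1).mpr h0
  refine h.congr fun n => ?_
  push_cast
  ring

noncomputable def indf (d s : ℕ) : ℕ → ℝ :=
  fun n => if d ∣ (n+1) then (1:ℝ)/((n:ℝ)+1)^s else 0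

lemma indf_nonneg (d s n : ℕ) : 0 ≤ indf d s n := by
  unfold indf; split_ifs with h
  · positivity
  · exact le_rfl

lemma indf_le (d s n : ℕ) : indf d s n ≤ 1/((n:ℝ)+1)^s := by
  unfold indf; split_ifs with h
  · exact le_rfl
  · positivity

lemma indf_summable (d s : ℕ) (hs : 2 ≤ s) : Summable (indf d s) :=
  Summable.of_nonneg_of_le (fun n => indf_nonneg d s n) (fun n => indf_le d s n)
    (base_summable s hs)

lemma indf_tsum (d s : ℕ) (hd : 0 < d) :
    ∑' n : ℕ, indf d s n = (1/(d:ℝ)^s) * ∑' k : ℕ, 1/((k:ℝ)+1)^s := by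
  have hi : Function.Injective (fun k : ℕ => d*(k+1)-1) := by
    intro a b h
    simp only at h
    have ha : 1 ≤ d*(a+1) := Nat.one_le_iff_ne_zero.mpr (by positivity)
    have hb : 1 ≤ d*(b+1) := Nat.one_le_iff_ne_zero.mpr (by positivity)
    have : d*(a+1) = d*(b+1) := by omega
    have := Nat.eq_of_mul_eq_mul_left hd this
    omega
  have hsupp : Function.support (indf d s) ⊆ Set.range (fun k : ℕ => d*(k+1)-1) := by
    intro n hn
    unfold indf at hn
    by_cases h : d ∣ (n+1)
    · obtain ⟨m, hm⟩ := h
      rcases m with _ | m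
      · simp at hm
      · exact ⟨m, by simp only; omega⟩
    · simp [h] at hn
  rw [← hi.tsum_eq hsupp, ← tsum_mul_left]
  congr 1
  funext k
  have hk : d*(k+1)-1+1 = d*(k+1) := by
    have : 1 ≤ d*(k+1) := Nat.one_le_iff_ne_zero.mpr (by positivity)
    omega
  have hdvd : d ∣ (d*(k+1)-1+1) := by rw [hk]; exact ⟨k+1, rfl⟩
  have hcast : ((d*(k+1)-1 : ℕ) : ℝ) + 1 = (d:ℝ) * ((k:ℝ)+1) := by
    have : (((d*(k+1)-1)+1 : ℕ) : ℝ) = ((d*(k+1) : ℕ) : ℝ) := by rw [hk]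
    push_cast at this
    linarith
  simp only [indf, hdvd, if_true, hcast]
  rw [mul_pow]
  have h1 : (0:ℝ) < (d:ℝ)^s := by positivity
  have h2 : (0:ℝ) < ((k:ℝ)+1)^s := by positivity
  field_simp

lemma psi_decomp (n : ℕ) :
    (psi (n+1) : ℤ) = -48 + 768 * (if 2 ∣ (n+1) then 1 else 0)
      + 432 * (if 3 ∣ (n+1) then 1 else 0) - 6912 * (if 6 ∣ (n+1) then 1 else 0) := by
  simp only [psi]
  split_ifs <;> omega

lemma main_lemma (s : ℕ) (hs : 2 ≤ s) :
    Summable (fun n : ℕ => (psi (n+1) : ℝ) / ((n:ℝ)+1)^s) ∧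
    (∑' n : ℕ, (psi (n+1) : ℝ) / ((n:ℝ)+1)^s)
      = (-48 + 768/(2:ℝ)^s + 432/(3:ℝ)^s - 6912/(6:ℝ)^s) * ∑' k : ℕ, 1/((k:ℝ)+1)^s := by
  have hbase := base_summable s hs
  have h2 := indf_summable 2 s hs
  have h3 := indf_summable 3 s hs
  have h6 := indf_summable 6 s hs
  have hfun : (fun n : ℕ => (psi (n+1) : ℝ) / ((n:ℝ)+1)^s)
      = fun n : ℕ => (-48) * (1/((n:ℝ)+1)^s) + 768 * indf 2 s n + 432 * indf 3 s n
        + (-6912) * indf 6 s n := by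
    funext n
    have hc : ((psi (n+1) : ℤ) : ℝ) = -48 + 768 * (if 2 ∣ (n+1) then (1:ℝ) else 0)
        + 432 * (if 3 ∣ (n+1) then (1:ℝ) else 0) - 6912 * (if 6 ∣ (n+1) then (1:ℝ) else 0) := by
      rw [psi_decomp n]
      push_cast
      split_ifs <;> ring
    rw [hc]
    unfold indf
    have hne : ((n:ℝ)+1)^s ≠ 0 := by positivity
    split_ifs <;> field_simp <;> ring
  have hA : Summable (fun n : ℕ => (-48 : ℝ) * (1/((n:ℝ)+1)^s)) := hbase.mul_left _
  have hB : Summable (fun n : ℕ => (768 : ℝ) * indf 2 s n) := h2.mul_left _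
  have hC : Summable (fun n : ℕ => (432 : ℝ) * indf 3 s n) := h3.mul_left _
  have hD : Summable (fun n : ℕ => (-6912 : ℝ) * indf 6 s n) := h6.mul_left _
  constructor
  · rw [hfun]
    exact ((hA.add hB).add hC).add hD
  · rw [hfun]
    rw [Summable.tsum_add ((hA.add hB).add hC) hD, Summable.tsum_add (hA.add hB) hC, Summable.tsum_add hA hB,
      tsum_mul_left, tsum_mul_left, tsum_mul_left, tsum_mul_left,
      indf_tsum 2 s (by norm_num), indf_tsum 3 s (by norm_num), indf_tsum 6 s (by norm_num)]
    push_cast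
    ring

theorem stmt18 :
    Summable (fun n : ℕ => |(psi (n+1) : ℝ) / ((n:ℝ)+1)^3|) ∧
    Summable (fun n : ℕ => |(psi (n+1) : ℝ) / ((n:ℝ)+1)^4|) ∧
    (∑' n : ℕ, (psi (n+1) : ℝ) / ((n:ℝ)+1)^3) = 32 * zeta3 ∧
    (∑' n : ℕ, (psi (n+1) : ℝ) / ((n:ℝ)+1)^4) = 0 := by
  obtain ⟨hs3, ht3⟩ := main_lemma 3 (by norm_num)
  obtain ⟨hs4, ht4⟩ := main_lemma 4 (by norm_num)
  refine ⟨hs3.abs, hs4.abs, ?_, ?_⟩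
  · rw [ht3, zeta3]
    norm_num
  · rw [ht4]
    norm_num
end
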